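/- arXiv:1210.0859 — 6 statements merged into one kernel-verified Lean document; each statement's English description precedes it below -/
import Mathlib

section
/- For all natural numbers d, l, m with d > 0 and 0 < l ≤ m, there exists a natural number n ≥ m such that for every coloring with d colors of the l-element subsets of {1,...,n}, there exists an m-element subset z of {1,...,n} such that all l-element subsets of z receive the same color. -/
/-!
The finite theorem follows by compactness from Ramsey's theorem for colourings of the
`l`-subsets of `ℕ`: if every `Fin n` had a bad colouring, the ultrafilter limit of these
colourings would be a colouring of `ℕ` without an infinite, hence without an `m`-element,
monochromatic set.

The infinite theorem is proved by induction on `l`. Repeatedly splitting off the least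
element `a i` of an infinite set and shrinking the rest to an infinite set on which
`s ↦ C (insert (a i) s)` is monochromatic yields an increasing sequence along which the
colour of an `(l + 1)`-set depends only on its least element; an infinite fibre of that
dependence is monochromatic.
-/

open Filter Finset

variable {α β κ : Type*}

def IsMonochromatic (C : Finset α → κ) (l : ℕ) (T : Set α) : Prop :=
  ∃ c, ∀ s : Finset α, ↑s ⊆ T → s.card = l → C s = c

lemma IsMonochromatic.mono {C : Finset α → κ} {l : ℕ} {T T' : Set α}
    (h : IsMonochromatic C l T) (hT' : T' ⊆ T) : IsMonochromatic C l T' :=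
  let ⟨c, hc⟩ := h
  ⟨c, fun s hs => hc s (hs.trans hT')⟩

lemma StrictMono.coe_erase_subset_image_Ioi [LinearOrder α] [LinearOrder β] {a : α → β}
    (ha : StrictMono a) {s : Finset β} (hs : ↑s ⊆ Set.range a) {i : α}
    (hi : ∀ y ∈ s, a i ≤ y) : ↑(s.erase (a i)) ⊆ a '' Set.Ioi i := by
  intro y hy
  obtain ⟨hne, hys⟩ := mem_erase.mp hy
  obtain ⟨j, rfl⟩ := hs hys
  exact ⟨j, ha.lt_iff_lt.mp ((hi _ hys).lt_of_ne' hne), rfl⟩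

lemma exists_strictMono_isMonochromatic_insert {C : Finset ℕ → κ} {l : ℕ}
    (step : ∀ x (S : Set ℕ), S.Infinite →
      ∃ T ⊆ S, T.Infinite ∧ IsMonochromatic (fun s => C (insert x s)) l T)
    {S : Set ℕ} (hS : S.Infinite) :
    ∃ a : ℕ → ℕ, StrictMono a ∧ Set.range a ⊆ S ∧
      ∀ i, IsMonochromatic (fun s => C (insert (a i) s)) l (a '' Set.Ioi i) := by
  have next : ∀ S : {S : Set ℕ // S.Infinite}, ∃ T : {T : Set ℕ // T.Infinite},
      T.1 ⊆ S.1 \ {sInf S.1} ∧ IsMonochromatic (fun s => C (insert (sInf S.1) s)) l T.1 := by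
    rintro ⟨S, hS⟩
    obtain ⟨T, hTS, hT, hmono⟩ := step (sInf S) (S \ {sInf S}) (hS.sdiff (Set.finite_singleton _))
    exact ⟨⟨T, hT⟩, hTS, hmono⟩
  choose F hF_sub hF_mono using next
  let g : ℕ → {S : Set ℕ // S.Infinite} := fun i => F^[i] ⟨S, hS⟩
  have g_succ : ∀ i, g (i + 1) = F (g i) := fun i => Function.iterate_succ_apply' F i _
  have g_anti : Antitone fun i => (g i).1 := antitone_nat_of_succ_le fun i => by
    rw [g_succ]
    exact (hF_sub _).trans Set.sdiff_subset
  have sInf_mem_g : ∀ i, sInf (g i).1 ∈ (g i).1 := fun i => Nat.sInf_mem (g i).2.nonempty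
  refine ⟨fun i => sInf (g i).1, strictMono_nat_of_lt_succ fun i => ?_, ?_, fun i => ?_⟩
  · obtain ⟨hle, hne⟩ := hF_sub (g i) (g_succ i ▸ sInf_mem_g (i + 1))
    rw [g_succ]
    exact (Nat.sInf_le hle).lt_of_ne' hne
  · rintro _ ⟨i, rfl⟩
    exact g_anti (Nat.zero_le i) (sInf_mem_g i)
  · refine (hF_mono (g i)).mono ?_
    rintro _ ⟨j, hij, rfl⟩
    exact g_succ i ▸ g_anti (Nat.succ_le_of_lt hij) (sInf_mem_g j)

theorem exists_infinite_isMonochromatic [Finite κ] (l : ℕ) (C : Finset ℕ → κ) {S : Set ℕ}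
    (hS : S.Infinite) : ∃ T ⊆ S, T.Infinite ∧ IsMonochromatic C l T := by
  induction l generalizing C S with
  | zero => exact ⟨S, subset_rfl, hS, C ∅, fun s _ hs => by rw [card_eq_zero.mp hs]⟩
  | succ l ih =>
    obtain ⟨a, ha, haS, hmono⟩ := exists_strictMono_isMonochromatic_insert
      (fun x S hS => ih (fun s => C (insert x s)) hS) hS
    choose col hcol using hmono
    obtain ⟨c, hc⟩ := Finite.exists_infinite_fiber col
    refine ⟨a '' (col ⁻¹' {c}), (Set.image_subset_range _ _).trans haS,
      (Set.infinite_coe_iff.mp hc).image ha.injective.injOn, c, fun s hs hcard => ?_⟩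
    have hne : s.Nonempty := card_pos.mp (hcard ▸ l.succ_pos)
    obtain ⟨i, hi, hmin⟩ := hs (s.min'_mem hne)
    have hmem : a i ∈ s := hmin ▸ s.min'_mem hne
    have herase : ↑(s.erase (a i)) ⊆ a '' Set.Ioi i :=
      ha.coe_erase_subset_image_Ioi (hs.trans (Set.image_subset_range _ _))
        fun y hy => hmin ▸ s.min'_le y hy
    calc C s = C (insert (a i) (s.erase (a i))) := by rw [insert_erase hmem]
      _ = col i := hcol i _ herase (by rw [card_erase_of_mem hmem, hcard, Nat.add_sub_cancel])
      _ = c := hi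

lemma Ultrafilter.exists_eventually_eq [Finite κ] (U : Ultrafilter α) (f : α → κ) :
    ∃ c, ∀ᶠ x in U, f x = c := by
  obtain ⟨c, hc⟩ := (U.map f).eq_pure_of_finite
  exact ⟨c, show {c} ∈ U.map f from hc ▸ Ultrafilter.mem_pure.mpr rfl⟩

theorem exists_card_eq_frequently_isMonochromatic [Finite κ] (l m : ℕ)
    (C : ℕ → Finset ℕ → κ) :
    ∃ z : Finset ℕ, z.card = m ∧ ∃ᶠ n in atTop, IsMonochromatic (C n) l z := by
  let U := hyperfilter ℕ
  choose C_lim hC_lim using fun s => U.exists_eventually_eq (C · s)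
  obtain ⟨T, -, hT, c, hc⟩ := exists_infinite_isMonochromatic l C_lim Set.infinite_univ
  obtain ⟨z, hzT, hz⟩ := hT.exists_subset_card_eq m
  have eventually_mono : ∀ᶠ n in U, ∀ s ∈ z.powerset, s.card = l → C n s = c :=
    (eventually_all_finset _).mpr fun s hs => (hC_lim s).mono fun _ hn hcard =>
      hn.trans (hc s ((coe_subset.mpr (mem_powerset.mp hs)).trans hzT) hcard)
  refine ⟨z, hz, ?_⟩
  refine (eventually_mono.frequently.filter_mono ?_).mono fun n hn =>
    ⟨c, fun s hs => hn s (mem_powerset.mpr (coe_subset.mp hs))⟩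
  exact hyperfilter_le_cofinite.trans Nat.cofinite_eq_atTop.le

lemma exists_card_eq_of_isMonochromatic_preimage_val {n l : ℕ} {C : Finset (Fin n) → κ}
    {z : Finset ℕ} (hz : ∀ x ∈ z, x < n)
    (h : IsMonochromatic (fun s => C (s.preimage Fin.valEmbedding Fin.valEmbedding.injective.injOn))
      l z) :
    ∃ z' : Finset (Fin n), z'.card = z.card ∧ ∃ c, ∀ s ⊆ z', s.card = l → C s = c := by
  obtain ⟨c, hc⟩ := h
  refine ⟨z.attachFin hz, card_attachFin z hz, c, fun s hs hcard => ?_⟩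
  have hsz : s.map Fin.valEmbedding ⊆ z :=
    map_valEmbedding_attachFin hz ▸ map_subset_map.mpr hs
  simpa only [preimage_map] using
    hc (s.map Fin.valEmbedding) (coe_subset.mpr hsz) (by rw [card_map, hcard])

theorem classical_ramsey_general (d l m : ℕ) :
    ∃ n : ℕ, m ≤ n ∧ ∀ C : Finset (Fin n) → Fin d,
      ∃ z : Finset (Fin n), z.card = m ∧
        ∃ c : Fin d, ∀ s : Finset (Fin n), s ⊆ z → s.card = l → C s = c := by
  by_contra! h
  choose C hC using fun k => h (m + k) (m.le_add_right k)
  obtain ⟨z, hz, hfreq⟩ := exists_card_eq_frequently_isMonochromatic l m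
    fun k s => C k (s.preimage Fin.valEmbedding Fin.valEmbedding.injective.injOn)
  obtain ⟨k, hmono, hk⟩ := (hfreq.and_eventually (eventually_gt_atTop (z.sup id))).exists
  have hz_lt : ∀ x ∈ z, x < m + k := fun x hx => by
    have : x ≤ z.sup id := le_sup (f := id) hx
    omega
  obtain ⟨z', hz', c, hc⟩ := exists_card_eq_of_isMonochromatic_preimage_val hz_lt hmono
  obtain ⟨s, hs, hcard, hne⟩ := hC k z' (hz'.trans hz) c
  exact hne (hc s hs hcard)

/-- Classical finite Ramsey theorem: for `d > 0` and `0 < l ≤ m` there is `n ≥ m`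
such that every `d`-coloring of the `l`-element subsets of an `n`-element set admits
an `m`-element subset all of whose `l`-element subsets get the same color. -/
theorem classical_ramsey (d l m : ℕ) (hd : 0 < d) (hl : 0 < l) (hlm : l ≤ m) :
    ∃ n : ℕ, m ≤ n ∧ ∀ C : Finset (Fin n) → Fin d,
      ∃ z : Finset (Fin n), z.card = m ∧
        ∃ c : Fin d, ∀ s : Finset (Fin n), s ⊆ z → s.card = l → C s = c :=
  classical_ramsey_general d l m
end

section
/- For all natural numbers d, l, m with d > 0 and 0 < l ≤ m, there exists n such that for every d-coloring of the set of strictly increasing injections from [l] to [n], there exists a strictly increasing injection a : [m] → [n] such that the set {a ∘ x : x a strictly increasing injection from [l] to [m]} is monochromatic. -/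
/-!
Induction on the arity `l`. For arity `l + 1`, repeatedly take the least remaining element `a`
and use the arity-`l` theorem for the colouring `y ↦ C (Fin.cons a y)` to shrink the remaining
set to one on which every tuple starting at `a` has the same colour. This produces a large set
on which the colour of an increasing tuple depends only on its first entry, and the pigeonhole
principle on those first-entry colours finishes the proof.
-/

open Finset

universe u

section

variable {α κ : Type*} [LinearOrder α] {l : ℕ}

def IsHomogeneous (C : (Fin l → α) → κ) (T : Finset α) : Prop :=
  ∃ c, ∀ x : Fin l → α, StrictMono x → (∀ i, x i ∈ T) → C x = c

def IsMinHomogeneous (C : (Fin (l + 1) → α) → κ) (T : Finset α) : Prop :=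
  ∃ f : α → κ, ∀ x : Fin (l + 1) → α, StrictMono x → (∀ i, x i ∈ T) → C x = f (x 0)

theorem isHomogeneous_fin_zero (C : (Fin 0 → α) → κ) (T : Finset α) : IsHomogeneous C T :=
  ⟨C isEmptyElim, fun _ _ _ => congrArg C (Subsingleton.elim _ _)⟩

theorem IsHomogeneous.mono {C : (Fin l → α) → κ} {T U : Finset α} (hU : IsHomogeneous C U)
    (hTU : T ⊆ U) : IsHomogeneous C T :=
  let ⟨c, hc⟩ := hU
  ⟨c, fun x hx hxT => hc x hx fun i => hTU (hxT i)⟩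

theorem isMinHomogeneous_empty (C : (Fin (l + 1) → α) → κ) : IsMinHomogeneous C ∅ :=
  ⟨fun b => C fun _ => b, fun _ _ hx => absurd (hx 0) (notMem_empty _)⟩

theorem IsMinHomogeneous.insert {C : (Fin (l + 1) → α) → κ} {a : α} {T : Finset α}
    (hT : IsMinHomogeneous C T) (ha : ∀ b ∈ T, a < b)
    (hcons : IsHomogeneous (fun y => C (Fin.cons a y)) T) :
    IsMinHomogeneous C (insert a T) := by
  obtain ⟨f, hf⟩ := hT
  obtain ⟨c, hc⟩ := hcons
  refine ⟨Function.update f a c, fun x hx hxT => ?_⟩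
  have hmem : ∀ i, a < x i → x i ∈ T := fun i h => (mem_insert.1 (hxT i)).resolve_left h.ne'
  by_cases h0 : x 0 = a
  · rw [h0, Function.update_self, ← Fin.cons_self_tail x, h0]
    exact hc _ (hx.comp Fin.strictMono_succ) fun j => hmem _ (h0 ▸ hx (Fin.succ_pos j))
  · have hax : a < x 0 := ha _ ((mem_insert.1 (hxT 0)).resolve_left h0)
    rw [Function.update_of_ne h0]
    exact hf x hx fun i => hmem i (hax.trans_le (hx.monotone (Fin.zero_le i)))

variable [Fintype κ]

theorem IsMinHomogeneous.exists_isHomogeneous {C : (Fin (l + 1) → α) → κ} {T : Finset α}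
    (hT : IsMinHomogeneous C T) {k : ℕ} (hk : Fintype.card κ * k < #T) :
    ∃ U ⊆ T, k < #U ∧ IsHomogeneous C U := by
  classical
  obtain ⟨f, hf⟩ := hT
  obtain ⟨c, -, hc⟩ := exists_lt_card_fiber_of_mul_lt_card_of_maps_to
    (t := univ) (fun b _ => mem_univ (f b)) (by rwa [card_univ])
  refine ⟨{b ∈ T | f b = c}, filter_subset _ _, hc, c, fun x hx hxU => ?_⟩
  rw [hf x hx fun i => (mem_filter.1 (hxU i)).1]
  exact (mem_filter.1 (hxU 0)).2

end

variable (κ : Type*)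

theorem exists_isMinHomogeneous {l : ℕ}
    (ih : ∀ k, ∃ n, ∀ {α : Type u} [LinearOrder α] (S : Finset α) (C : (Fin l → α) → κ),
      n ≤ #S → ∃ T ⊆ S, k ≤ #T ∧ IsHomogeneous C T) (t : ℕ) :
    ∃ n, ∀ {α : Type u} [LinearOrder α] (S : Finset α) (C : (Fin (l + 1) → α) → κ),
      n ≤ #S → ∃ T ⊆ S, t ≤ #T ∧ IsMinHomogeneous C T := by
  induction t with
  | zero => exact ⟨0, fun _ C _ => ⟨∅, empty_subset _, le_rfl, isMinHomogeneous_empty C⟩⟩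
  | succ t iht =>
    obtain ⟨N, hN⟩ := iht
    obtain ⟨n, hn⟩ := ih N
    refine ⟨n + 1, fun S C hS => ?_⟩
    have hSne : S.Nonempty := card_pos.1 (by omega)
    set a := S.min' hSne
    obtain ⟨T', hT'S, hNT', hT'⟩ := hn (S.erase a) (fun y => C (Fin.cons a y))
      (by rw [card_erase_of_mem (min'_mem S hSne)]; omega)
    obtain ⟨T, hTT', htT, hT⟩ := hN T' C hNT'
    have hTS : ∀ b ∈ T, b ∈ S.erase a := fun b hb => hT'S (hTT' hb)
    have ha : ∀ b ∈ T, a < b := fun b hb =>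
      (min'_le S b (mem_of_mem_erase (hTS b hb))).lt_of_ne (ne_of_mem_erase (hTS b hb)).symm
    refine ⟨insert a T, insert_subset (min'_mem S hSne) fun b hb => mem_of_mem_erase (hTS b hb),
      ?_, hT.insert ha (hT'.mono hTT')⟩
    rw [card_insert_of_notMem fun h => lt_irrefl a (ha a h)]
    omega

/-- The bound is uniform in the order `α`, so that it can be used with `α = Fin n`. -/
theorem exists_isHomogeneous [Fintype κ] (l k : ℕ) :
    ∃ n, ∀ {α : Type u} [LinearOrder α] (S : Finset α) (C : (Fin l → α) → κ),
      n ≤ #S → ∃ T ⊆ S, k ≤ #T ∧ IsHomogeneous C T := by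
  induction l generalizing k with
  | zero => exact ⟨k, fun S C hS => ⟨S, subset_rfl, hS, isHomogeneous_fin_zero C S⟩⟩
  | succ l ih =>
    obtain ⟨n, hn⟩ := exists_isMinHomogeneous κ ih (Fintype.card κ * k + 1)
    refine ⟨n, fun S C hS => ?_⟩
    obtain ⟨T, hTS, hkT, hT⟩ := hn S C hS
    obtain ⟨U, hUT, hkU, hU⟩ := hT.exists_isHomogeneous hkT
    exact ⟨U, hUT.trans hTS, hkU.le, hU⟩

theorem ramsey_increasing_injections_general (d l m : ℕ) :
    ∃ n : ℕ, ∀ C : (Fin l → Fin n) → Fin d,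
      ∃ a : Fin m → Fin n, StrictMono a ∧
        ∃ c : Fin d, ∀ x : Fin l → Fin m, StrictMono x → C (a ∘ x) = c := by
  obtain ⟨n, hn⟩ := exists_isHomogeneous (Fin d) l m
  refine ⟨n, fun C => ?_⟩
  obtain ⟨T, -, hmT, c, hc⟩ := hn (univ : Finset (Fin n)) C (by rw [card_univ, Fintype.card_fin])
  obtain ⟨U, hUT, hUm⟩ := exists_subset_card_eq hmT
  let a := U.orderEmbOfFin hUm
  exact ⟨a, a.strictMono, c, fun x hx =>
    hc _ (a.strictMono.comp hx) fun i => hUT (U.orderEmbOfFin_mem hUm (x i))⟩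

/-- The classical Ramsey theorem restated for strictly increasing injections:
for `d > 0` and `0 < l ≤ m` there is `n` such that every `d`-coloring of the
strictly increasing injections `[l] → [n]` admits a strictly increasing injection
`a : [m] → [n]` with `{a ∘ x : x : [l] → [m] increasing}` monochromatic. -/
theorem ramsey_increasing_injections (d l m : ℕ) (hd : 0 < d) (hl : 0 < l) (hlm : l ≤ m) :
    ∃ n : ℕ, ∀ C : (Fin l → Fin n) → Fin d,
      ∃ a : Fin m → Fin n, StrictMono a ∧
        ∃ c : Fin d, ∀ x : Fin l → Fin m, StrictMono x → C (a ∘ x) = c :=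
  ramsey_increasing_injections_general d l m
end

section
/- Abstract Ramsey theorem: Let (A, X) be a normed background (with multiplication ·, action ., truncation ∂, and norm |·|), and let (𝓕, 𝓟, •, ∙) be a pair of families over (A, X) satisfying conditions (A), (B), and (*). Assume each P ∈ 𝓟 is finite and for each P ∈ 𝓟 there is t ∈ ℕ with ∂^t P a singleton. If (𝓕, 𝓟) satisfies the pigeonhole condition (P), then it satisfies the Ramsey condition (R). -/
/-- A normed background `(A, X)`: a partial multiplication on `A` (given by a domain
predicate `mulDef` and a total function `mul`), a partial action of `A` on `X`
(given by `actDef` and `act`), a truncation `trunc : X → X` and a norm into a linear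
order `D`, satisfying: associativity whenever both sides are defined; the action
commutes with truncation; and the norm monotonicity/domain condition. -/
structure NormedBackground (A X D : Type*) [LinearOrder D] where
  mulDef : A → A → Prop
  mul : A → A → A
  actDef : A → X → Prop
  act : A → X → X
  trunc : X → X
  norm : X → D
  act_assoc : ∀ a b x, actDef b x → actDef a (act b x) → mulDef a b → actDef (mul a b) x →
    act a (act b x) = act (mul a b) x
  actDef_trunc : ∀ a x, actDef a x → actDef a (trunc x)
  act_trunc : ∀ a x, actDef a x → trunc (act a x) = act a (trunc x)
  norm_dom : ∀ a x y, norm x ≤ norm y → actDef a y → actDef a x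
  norm_mono : ∀ a x y, norm x ≤ norm y → actDef a y → norm (act a x) ≤ norm (act a y)

namespace NormedBackground

variable {A X D : Type*} [LinearOrder D] (NB : NormedBackground A X D)

/-- `b` extends `a`: whenever `a.x` is defined, so is `b.x` and they agree. -/
def Ext (b a : A) : Prop := ∀ x, NB.actDef a x → NB.actDef b x ∧ NB.act b x = NB.act a x

/-- The pointwise action `F . P` of a set on a set. -/
def actSet (F : Set A) (P : Set X) : Set X := {z | ∃ a ∈ F, ∃ x ∈ P, z = NB.act a x}

/-- `F . P` is defined: `a.x` is defined for all `a ∈ F`, `x ∈ P`. -/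
def actSetDef (F : Set A) (P : Set X) : Prop := ∀ a ∈ F, ∀ x ∈ P, NB.actDef a x

/-- The pointwise product `F · G` of two sets. -/
def mulSet (F G : Set A) : Set A := {c | ∃ a ∈ F, ∃ b ∈ G, c = NB.mul a b}

/-- `F · G` is defined: `a · b` is defined for all `a ∈ F`, `b ∈ G`. -/
def mulSetDef (F G : Set A) : Prop := ∀ a ∈ F, ∀ b ∈ G, NB.mulDef a b

end NormedBackground

/-- A pair of families `(𝓕, 𝓟, •, ∙)` over a normed background: families `Fam`, `Pam`
of non-empty subsets of `A`, `X` with partial operations `•` (encoded by the domain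
predicate `bulDef`) and `∙` (encoded by `bullDef`) which, when defined, are given
pointwise by the action and multiplication and take values in `Pam`, `Fam`. -/
structure PairFam {A X D : Type*} [LinearOrder D] (NB : NormedBackground A X D) where
  Fam : Set (Set A)
  Pam : Set (Set X)
  fam_nonempty : ∀ F ∈ Fam, F.Nonempty
  pam_nonempty : ∀ P ∈ Pam, P.Nonempty
  bulDef : Set A → Set X → Prop
  bullDef : Set A → Set A → Prop
  bulDef_mem : ∀ F P, bulDef F P → F ∈ Fam ∧ P ∈ Pam
  bul_pointwise : ∀ F P, bulDef F P → NB.actSetDef F P ∧ NB.actSet F P ∈ Pam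
  bullDef_mem : ∀ F G, bullDef F G → F ∈ Fam ∧ G ∈ Fam
  bull_pointwise : ∀ F G, bullDef F G → NB.mulSetDef F G ∧ NB.mulSet F G ∈ Fam

namespace PairFam

variable {A X D : Type*} [LinearOrder D] {NB : NormedBackground A X D}

/-- Condition (A): `𝓟` is closed under truncation. -/
def CondA (PF : PairFam NB) : Prop := ∀ P ∈ PF.Pam, NB.trunc '' P ∈ PF.Pam

/-- Condition (B): if `F • ∂P` is defined, then there is `G ∈ 𝓕` with `G • P` defined
and every element of `F` extended by an element of `G`. -/
def CondB (PF : PairFam NB) : Prop :=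
  ∀ F P, F ∈ PF.Fam → P ∈ PF.Pam → PF.bulDef F (NB.trunc '' P) →
    ∃ G ∈ PF.Fam, PF.bulDef G P ∧ ∀ f ∈ F, ∃ g ∈ G, NB.Ext g f

/-- Condition (*): if `F • (G • P)` is defined, then `(F ∙ G) • P` is defined. -/
def CondStar (PF : PairFam NB) : Prop :=
  ∀ F G P, PF.bulDef G P → PF.bulDef F (NB.actSet G P) →
    PF.bullDef F G ∧ PF.bulDef (NB.mulSet F G) P

/-- The pigeonhole condition (P). -/
def CondP (PF : PairFam NB) : Prop :=
  ∀ d : ℕ, 0 < d → ∀ P ∈ PF.Pam, ∀ y ∈ NB.trunc '' P,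
    ∃ F ∈ PF.Fam, ∃ a : A, PF.bulDef F P ∧ NB.actDef a y ∧
      ∀ C : X → Fin d, ∃ f ∈ F, NB.Ext f a ∧
        ∃ c : Fin d, ∀ x ∈ P, NB.trunc x = y → C (NB.act f x) = c

/-- The strengthened pigeonhole condition (P+). -/
def CondPplus (PF : PairFam NB) : Prop :=
  ∀ d : ℕ, 0 < d → ∀ t : ℕ, ∀ P ∈ PF.Pam, ∀ x ∈ NB.trunc^[t + 1] '' P,
    ∃ F ∈ PF.Fam, ∃ a : A, PF.bulDef F P ∧ NB.actDef a x ∧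
      ∀ C : X → Fin d, ∃ f ∈ F, NB.Ext f a ∧
        ∃ c : Fin d, ∀ z ∈ NB.trunc^[t] '' P, NB.trunc z = x → C (NB.act f z) = c

/-- The Ramsey condition (R). -/
def CondR (PF : PairFam NB) : Prop :=
  ∀ d : ℕ, 0 < d → ∀ P ∈ PF.Pam,
    ∃ F ∈ PF.Fam, PF.bulDef F P ∧
      ∀ C : X → Fin d, ∃ f ∈ F,
        ∃ c : Fin d, ∀ x ∈ P, C (NB.act f x) = c

end PairFam


/-!
Induct on the `t` with `∂^t P` a singleton. A family `G₀` witnessing (R) for `∂P` lifts by (B)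
to a family `G` acting on `P`, so it suffices to find `F` acting on `G . P` that makes every
fibre of `∂` monochromatic: the colouring it induces on `∂(G . P)` is then handled by `G₀`.
Such an `F` is built by applying (P) to one fibre at a time, in order of decreasing norm, and
composing the families obtained via (*). By the norm condition the element `a` supplied by (P)
at a fibre of largest norm acts on all remaining base points, which lets the induction
transport them along.
-/

theorem Set.exists_eq_comp_of_const_on_fibers {α β γ : Type*} [Nonempty β] {f : α → β}
    {p : α → γ} {s : Set α} (h : ∀ y ∈ p '' s, ∃ c, ∀ z ∈ s, p z = y → f z = c) :
    ∃ g : γ → β, ∀ z ∈ s, f z = g (p z) := by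
  classical
  refine ⟨fun y => if hy : y ∈ p '' s then (h y hy).choose else Classical.arbitrary β,
    fun z hz => ?_⟩
  have hz' : p z ∈ p '' s := ⟨z, hz, rfl⟩
  simp only [dif_pos hz']
  exact (h _ hz').choose_spec z hz rfl

namespace NormedBackground

variable {A X D : Type*} [LinearOrder D] (NB : NormedBackground A X D)

theorem trunc_act_of_ext {g a : A} {x : X} (hg : NB.Ext g a) (hgx : NB.actDef g x)
    (hax : NB.actDef a (NB.trunc x)) : NB.trunc (NB.act g x) = NB.act a (NB.trunc x) := by
  rw [NB.act_trunc g x hgx, (hg _ hax).2]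

end NormedBackground

namespace PairFam

variable {A X D : Type*} [LinearOrder D] {NB : NormedBackground A X D} {PF : PairFam NB}
  {d : ℕ}

def HasRamsey (PF : PairFam NB) (d : ℕ) (P : Set X) : Prop :=
  ∃ F ∈ PF.Fam, PF.bulDef F P ∧
    ∀ C : X → Fin d, ∃ f ∈ F, ∃ c : Fin d, ∀ x ∈ P, C (NB.act f x) = c

def HasFiberRamsey (PF : PairFam NB) (d : ℕ) (R S : Set X) : Prop :=
  ∃ F ∈ PF.Fam, PF.bulDef F R ∧
    ∀ C : X → Fin d, ∃ f ∈ F, ∀ y ∈ S, ∃ c : Fin d,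
      ∀ z ∈ R, NB.trunc z = y → C (NB.act f z) = c

theorem CondP.exists_bulDef (hP : CondP PF) {R : Set X} (hR : R ∈ PF.Pam) :
    ∃ F ∈ PF.Fam, PF.bulDef F R := by
  obtain ⟨r, hr⟩ := PF.pam_nonempty R hR
  obtain ⟨F, hF, -, hFR, -⟩ := hP 1 one_pos R hR (NB.trunc r) ⟨r, hr, rfl⟩
  exact ⟨F, hF, hFR⟩

theorem CondStar.mulSet_mem (hStar : CondStar PF) {F G : Set A} {P : Set X}
    (hG : PF.bulDef G P) (hF : PF.bulDef F (NB.actSet G P)) : NB.mulSet F G ∈ PF.Fam :=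
  (PF.bull_pointwise F G (hStar F G P hG hF).1).2

theorem CondStar.act_mul (hStar : CondStar PF) {F G : Set A} {P : Set X}
    (hG : PF.bulDef G P) (hF : PF.bulDef F (NB.actSet G P)) {f g : A} {x : X}
    (hf : f ∈ F) (hg : g ∈ G) (hx : x ∈ P) :
    NB.act (NB.mul f g) x = NB.act f (NB.act g x) := by
  obtain ⟨hFG, hFGP⟩ := hStar F G P hG hF
  exact (NB.act_assoc f g x ((PF.bul_pointwise G P hG).1 g hg x hx)
    ((PF.bul_pointwise F _ hF).1 f hf _ ⟨g, hg, x, hx, rfl⟩)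
    ((PF.bull_pointwise F G hFG).1 f hf g hg)
    ((PF.bul_pointwise _ P hFGP).1 _ ⟨f, hf, g, hg, rfl⟩ x hx)).symm

theorem hasRamsey_singleton (hP : CondP PF) {z : X} (hz : {z} ∈ PF.Pam) :
    HasRamsey PF d {z} := by
  obtain ⟨F, hF, hFz⟩ := hP.exists_bulDef hz
  obtain ⟨f, hf⟩ := PF.fam_nonempty F hF
  exact ⟨F, hF, hFz, fun C => ⟨f, hf, C (NB.act f z), by simp⟩⟩

theorem hasFiberRamsey_empty (hP : CondP PF) {R : Set X} (hR : R ∈ PF.Pam) :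
    HasFiberRamsey PF d R ∅ := by
  obtain ⟨F, hF, hFR⟩ := hP.exists_bulDef hR
  obtain ⟨f, hf⟩ := PF.fam_nonempty F hF
  exact ⟨F, hF, hFR, fun _ => ⟨f, hf, by simp⟩⟩

/-- One application of (P), at the fibre over `x`: the fibres over the other points `y ∈ S`
are carried by `h ∈ H` to fibres of `H . R` over `a . y`, where the induction handles them. -/
theorem HasFiberRamsey.of_pigeonhole (hStar : CondStar PF) {R S : Set X} {x : X} {H : Set A}
    {a : A} (hHR : PF.bulDef H R) (haS : ∀ y ∈ S, NB.actDef a y)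
    (hHcol : ∀ C : X → Fin d, ∃ h ∈ H, NB.Ext h a ∧
      ∃ c : Fin d, ∀ z ∈ R, NB.trunc z = x → C (NB.act h z) = c)
    (hrest : HasFiberRamsey PF d (NB.actSet H R) (NB.act a '' (S \ {x}))) :
    HasFiberRamsey PF d R S := by
  obtain ⟨F, -, hFR', hFcol⟩ := hrest
  refine ⟨NB.mulSet F H, hStar.mulSet_mem hHR hFR', (hStar F H R hHR hFR').2, fun C => ?_⟩
  obtain ⟨φ, hφ, hφcol⟩ := hFcol C
  obtain ⟨h, hh, hha, cx, hcx⟩ := hHcol fun v => C (NB.act φ v)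
  refine ⟨NB.mul φ h, ⟨φ, hφ, h, hh, rfl⟩, fun y hy => ?_⟩
  by_cases hyx : y = x
  · refine ⟨cx, fun z hz hzy => ?_⟩
    rw [hStar.act_mul hHR hFR' hφ hh hz]
    exact hcx z hz (hzy.trans hyx)
  · obtain ⟨c, hc⟩ := hφcol (NB.act a y) ⟨y, ⟨hy, hyx⟩, rfl⟩
    refine ⟨c, fun z hz hzy => ?_⟩
    rw [hStar.act_mul hHR hFR' hφ hh hz]
    refine hc _ ⟨h, hh, z, hz, rfl⟩ ?_
    rw [NB.trunc_act_of_ext hha ((PF.bul_pointwise H R hHR).1 h hh z hz) (hzy ▸ haS y hy), hzy]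

theorem hasFiberRamsey_of_finite (hStar : CondStar PF) (hP : CondP PF) (hd : 0 < d)
    {R S : Set X} (hR : R ∈ PF.Pam) (hS : S ⊆ NB.trunc '' R) (hSfin : S.Finite) :
    HasFiberRamsey PF d R S := by
  obtain ⟨n, hn⟩ : ∃ n, S.ncard ≤ n := ⟨_, le_rfl⟩
  induction n generalizing R S with
  | zero =>
    rw [(Set.ncard_eq_zero hSfin).mp (Nat.le_zero.mp hn)]
    exact hasFiberRamsey_empty hP hR
  | succ n ih =>
    rcases S.eq_empty_or_nonempty with rfl | hSne
    · exact hasFiberRamsey_empty hP hR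
    obtain ⟨x, hxS, hxmax⟩ := Set.exists_max_image S NB.norm hSfin hSne
    obtain ⟨H, -, a, hHR, hax, hHcol⟩ := hP d hd R hR x (hS hxS)
    have haS : ∀ y ∈ S, NB.actDef a y := fun y hy => NB.norm_dom a y x (hxmax y hy) hax
    obtain ⟨h₀, hh₀, hh₀a, -⟩ := hHcol fun _ => ⟨0, hd⟩
    have hS' : NB.act a '' (S \ {x}) ⊆ NB.trunc '' NB.actSet H R := by
      rintro - ⟨y, ⟨hy, -⟩, rfl⟩
      obtain ⟨r, hr, rfl⟩ := hS hy
      exact ⟨NB.act h₀ r, ⟨h₀, hh₀, r, hr, rfl⟩,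
        NB.trunc_act_of_ext hh₀a ((PF.bul_pointwise H R hHR).1 h₀ hh₀ r hr) (haS _ hy)⟩
    have hcard : (NB.act a '' (S \ {x})).ncard ≤ n := by
      have := Set.ncard_sdiff_singleton_add_one hxS hSfin
      have := Set.ncard_image_le (f := NB.act a) (hSfin.sdiff (t := {x}))
      omega
    exact .of_pigeonhole hStar hHR haS hHcol
      (ih (PF.bul_pointwise H R hHR).2 hS' (hSfin.sdiff.image _) hcard)

theorem HasRamsey.of_trunc (hB : CondB PF) (hStar : CondStar PF)
    (hfin : ∀ P ∈ PF.Pam, P.Finite) (hP : CondP PF) (hd : 0 < d) {P : Set X}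
    (hPmem : P ∈ PF.Pam) (h : HasRamsey PF d (NB.trunc '' P)) : HasRamsey PF d P := by
  obtain ⟨G₀, hG₀, hG₀P, hG₀col⟩ := h
  obtain ⟨G, -, hGP, hGext⟩ := hB G₀ P hG₀ hPmem hG₀P
  have hP₀ : NB.actSet G P ∈ PF.Pam := (PF.bul_pointwise G P hGP).2
  obtain ⟨F, -, hFP₀, hFcol⟩ :=
    hasFiberRamsey_of_finite hStar hP hd hP₀ subset_rfl ((hfin _ hP₀).image NB.trunc)
  refine ⟨NB.mulSet F G, hStar.mulSet_mem hGP hFP₀, (hStar F G P hGP hFP₀).2, fun C => ?_⟩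
  obtain ⟨φ, hφ, hφcol⟩ := hFcol C
  have := Fin.pos_iff_nonempty.mp hd
  obtain ⟨C', hC'⟩ := Set.exists_eq_comp_of_const_on_fibers hφcol
  obtain ⟨g₀, hg₀, c, hc⟩ := hG₀col C'
  obtain ⟨g, hg, hgg₀⟩ := hGext g₀ hg₀
  refine ⟨NB.mul φ g, ⟨φ, hφ, g, hg, rfl⟩, c, fun x hx => ?_⟩
  have hx' : NB.trunc x ∈ NB.trunc '' P := ⟨x, hx, rfl⟩
  calc C (NB.act (NB.mul φ g) x) = C (NB.act φ (NB.act g x)) := by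
        rw [hStar.act_mul hGP hFP₀ hφ hg hx]
    _ = C' (NB.trunc (NB.act g x)) := hC' _ ⟨g, hg, x, hx, rfl⟩
    _ = C' (NB.act g₀ (NB.trunc x)) := by
        rw [NB.trunc_act_of_ext hgg₀ ((PF.bul_pointwise G P hGP).1 g hg x hx)
          ((PF.bul_pointwise G₀ _ hG₀P).1 g₀ hg₀ _ hx')]
    _ = c := hc _ hx'

end PairFam

open PairFam in
/-- Abstract Ramsey theorem: for a pair of families over a normed background
satisfying (A), (B) and (*), with every `P ∈ 𝓟` finite and some iterated truncation
of each `P ∈ 𝓟` a singleton, the pigeonhole condition (P) implies the Ramsey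
condition (R). -/
theorem abstract_ramsey {A X D : Type*} [LinearOrder D] {NB : NormedBackground A X D}
    (PF : PairFam NB) (hA : CondA PF) (hB : CondB PF) (hStar : CondStar PF)
    (hfin : ∀ P ∈ PF.Pam, P.Finite)
    (hsing : ∀ P ∈ PF.Pam, ∃ t : ℕ, ∃ z : X, NB.trunc^[t] '' P = {z})
    (hP : CondP PF) : CondR PF := by
  intro d hd P hPmem
  obtain ⟨t, z, hz⟩ := hsing P hPmem
  induction t generalizing P with
  | zero =>
    rw [Function.iterate_zero, Set.image_id] at hz
    subst hz
    exact hasRamsey_singleton hP hPmem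
  | succ t ih =>
    rw [Function.iterate_succ, Set.image_comp] at hz
    exact HasRamsey.of_trunc hB hStar hfin hP hd hPmem (ih _ (hA P hPmem) hz)
end

section
/- Abstract Ramsey theorem without conditions (A) and (B): Let (A, X) be a normed background and (𝓕, 𝓟, •, ∙) a pair of families over it satisfying condition (*). Assume each P ∈ 𝓟 is finite and for each P there is t with ∂^t P a singleton. If (𝓕, 𝓟) satisfies condition (P+), then it satisfies (R). -/
/-!
Monochromatic copies are found one truncation level at a time, from the singleton `∂^t P`
down to `∂^0 P = P`. Suppose `H` handles level `s + 1` of `P` and put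
`Q = H • P`. Applying (P+) to the points `z ∈ ∂^{s+1} Q` in order of decreasing norm and
composing the resulting families by (*), one gets `B` with `B • Q` defined such that for every
colouring some `b ∈ B` makes each fibre `b . (∂^s Q)_z` monochromatic; decreasing norms keep
the earlier shifts `a` defined on the later points. Colouring each `z` by the colour of its
fibre and choosing `h ∈ H` for that colouring, `b · h` makes `∂^s P` monochromatic.
-/

open Set

namespace NormedBackground

variable {A X D : Type*} [LinearOrder D] (NB : NormedBackground A X D)

/-- The fibre `(∂^t P)_x` of the paper. -/
def truncFiber (t : ℕ) (P : Set X) (x : X) : Set X := {z ∈ NB.trunc^[t] '' P | NB.trunc z = x}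

theorem truncFiber_subset (t : ℕ) (P : Set X) (x : X) :
    NB.truncFiber t P x ⊆ NB.trunc^[t] '' P :=
  sep_subset _ _

variable {NB}

theorem actDef_trunc_iterate {a : A} {x : X} (h : NB.actDef a x) (n : ℕ) :
    NB.actDef a (NB.trunc^[n] x) := by
  induction n with
  | zero => exact h
  | succ n ih => rw [Function.iterate_succ_apply']; exact NB.actDef_trunc a _ ih

theorem trunc_iterate_act {a : A} {x : X} (h : NB.actDef a x) (n : ℕ) :
    NB.trunc^[n] (NB.act a x) = NB.act a (NB.trunc^[n] x) := by
  induction n with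
  | zero => rfl
  | succ n ih =>
    rw [Function.iterate_succ_apply', Function.iterate_succ_apply', ih,
      NB.act_trunc a _ (actDef_trunc_iterate h n)]

theorem act_mul_trunc_iterate {a b : A} {x : X} (ha : NB.actDef a x)
    (hb : NB.actDef b (NB.act a x)) (hba : NB.mulDef b a) (hbax : NB.actDef (NB.mul b a) x)
    (n : ℕ) :
    NB.act (NB.mul b a) (NB.trunc^[n] x) = NB.act b (NB.act a (NB.trunc^[n] x)) := by
  refine (NB.act_assoc b a _ (actDef_trunc_iterate ha n) ?_ hba
    (actDef_trunc_iterate hbax n)).symm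
  rw [← trunc_iterate_act ha]
  exact actDef_trunc_iterate hb n

variable {F : Set A} {P : Set X} {f : A}

theorem mapsTo_act_trunc_iterate_image (hF : NB.actSetDef F P) (hf : f ∈ F) (n : ℕ) :
    MapsTo (NB.act f) (NB.trunc^[n] '' P) (NB.trunc^[n] '' NB.actSet F P) := by
  rintro _ ⟨y, hy, rfl⟩
  exact ⟨NB.act f y, ⟨f, hf, y, hy, rfl⟩, trunc_iterate_act (hF f hf y hy) n⟩

theorem mapsTo_act_truncFiber (hF : NB.actSetDef F P) (hf : f ∈ F) (t : ℕ) (x : X) :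
    MapsTo (NB.act f) (NB.truncFiber t P x) (NB.truncFiber t (NB.actSet F P) (NB.act f x)) := by
  rintro _ ⟨⟨y, hy, rfl⟩, rfl⟩
  refine ⟨mapsTo_act_trunc_iterate_image hF hf t ⟨y, hy, rfl⟩, ?_⟩
  exact NB.act_trunc f _ (actDef_trunc_iterate (hF f hf y hy) t)

end NormedBackground

namespace PairFam

variable {A X D : Type*} [LinearOrder D] {NB : NormedBackground A X D} (PF : PairFam NB)

def RamseyAt (d : ℕ) (P S : Set X) : Prop :=
  ∃ F, PF.bulDef F P ∧ ∀ C : X → Fin d, ∃ f ∈ F, (C ∘ NB.act f '' S).Subsingleton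

variable {PF} {F B : Set A} {P : Set X} {d s : ℕ}

theorem eqOn_act_mul (hStar : PF.CondStar) (hF : PF.bulDef F P)
    (hB : PF.bulDef B (NB.actSet F P)) {b f : A} (hb : b ∈ B) (hf : f ∈ F) (n : ℕ) :
    EqOn (NB.act (NB.mul b f)) (NB.act b ∘ NB.act f) (NB.trunc^[n] '' P) := by
  obtain ⟨hBF, hBFP⟩ := hStar B F P hF hB
  rintro _ ⟨y, hy, rfl⟩
  have hfy := (PF.bul_pointwise F P hF).1 f hf y hy
  exact NB.act_mul_trunc_iterate hfy
    ((PF.bul_pointwise B _ hB).1 b hb _ ⟨f, hf, y, hy, rfl⟩)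
    ((PF.bull_pointwise B F hBF).1 b hb f hf)
    ((PF.bul_pointwise _ P hBFP).1 _ ⟨b, hb, f, hf, rfl⟩ y hy) n

theorem CondPplus.exists_bulDef (h : PF.CondPplus) (hP : P ∈ PF.Pam) : ∃ F, PF.bulDef F P := by
  obtain ⟨y, hy⟩ := PF.pam_nonempty P hP
  obtain ⟨F, -, -, hF, -⟩ := h 1 one_pos 0 P hP (NB.trunc^[1] y) ⟨y, hy, rfl⟩
  exact ⟨F, hF⟩

theorem CondPplus.exists_fiber_subsingleton (h : PF.CondPplus) (hd : 0 < d) (hP : P ∈ PF.Pam)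
    {z : X} (hz : z ∈ NB.trunc^[s + 1] '' P) :
    ∃ F, PF.bulDef F P ∧ ∃ a, NB.actDef a z ∧ ∀ C : X → Fin d,
      ∃ f ∈ F, NB.Ext f a ∧ (C ∘ NB.act f '' NB.truncFiber s P z).Subsingleton := by
  obtain ⟨F, -, a, hF, ha, hmono⟩ := h d hd s P hP z hz
  refine ⟨F, hF, a, ha, fun C => ?_⟩
  obtain ⟨f, hf, hfa, c, hc⟩ := hmono C
  refine ⟨f, hf, hfa, ?_⟩
  rintro _ ⟨u, hu, rfl⟩ _ ⟨v, hv, rfl⟩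
  exact (hc u hu.1 hu.2).trans (hc v hv.1 hv.2).symm

theorem ramseyAt_singleton (hPplus : PF.CondPplus) (hP : P ∈ PF.Pam) (z : X) :
    PF.RamseyAt d P {z} := by
  obtain ⟨F, hF⟩ := hPplus.exists_bulDef hP
  obtain ⟨f, hf⟩ := PF.fam_nonempty F (PF.bulDef_mem F P hF).1
  exact ⟨F, hF, fun C => ⟨f, hf, subsingleton_singleton.image _⟩⟩

theorem exists_fibers_subsingleton (hStar : PF.CondStar) (hPplus : PF.CondPplus) (hd : 0 < d)
    (Z : Finset X) {Q : Set X} (hQ : Q ∈ PF.Pam) (hZ : ↑Z ⊆ NB.trunc^[s + 1] '' Q) :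
    ∃ B, PF.bulDef B Q ∧ ∀ C : X → Fin d,
      ∃ b ∈ B, ∀ z ∈ Z, (C ∘ NB.act b '' NB.truncFiber s Q z).Subsingleton := by
  classical
  induction hn : Z.card using Nat.strong_induction_on generalizing Z Q with
  | _ n ih =>
  rcases Z.eq_empty_or_nonempty with rfl | hZne
  · obtain ⟨B, hB⟩ := hPplus.exists_bulDef hQ
    obtain ⟨b, hb⟩ := PF.fam_nonempty B (PF.bulDef_mem B Q hB).1
    exact ⟨B, hB, fun _ => ⟨b, hb, by simp⟩⟩
  obtain ⟨z, hzZ, hzmax⟩ := Z.exists_max_image NB.norm hZne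
  obtain ⟨F, hF, a, haz, hFmono⟩ := hPplus.exists_fiber_subsingleton hd hQ (hZ hzZ)
  have hFdef := (PF.bul_pointwise F Q hF).1
  have ha : ∀ w ∈ Z, NB.actDef a w := fun w hw => NB.norm_dom a w z (hzmax w hw) haz
  set Z' := (Z.erase z).image (NB.act a)
  have hZ' : ↑Z' ⊆ NB.trunc^[s + 1] '' NB.actSet F Q := by
    obtain ⟨f₀, hf₀, hf₀a, -⟩ := hFmono fun _ => ⟨0, hd⟩
    intro _ hw'
    obtain ⟨w, hw, rfl⟩ := Finset.mem_image.mp (Finset.mem_coe.mp hw')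
    have hwZ := Finset.mem_of_mem_erase hw
    rw [← (hf₀a w (ha w hwZ)).2]
    exact NB.mapsTo_act_trunc_iterate_image hFdef hf₀ (s + 1) (hZ hwZ)
  have hZ'card : Z'.card < n :=
    hn ▸ Finset.card_image_le.trans_lt (Finset.card_erase_lt_of_mem hzZ)
  obtain ⟨B, hB, hBmono⟩ := ih _ hZ'card Z' (PF.bul_pointwise F Q hF).2 hZ' rfl
  refine ⟨_, (hStar B F Q hF hB).2, fun C => ?_⟩
  obtain ⟨b, hb, hbmono⟩ := hBmono C
  obtain ⟨f, hf, hfa, hfz⟩ := hFmono (C ∘ NB.act b)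
  refine ⟨NB.mul b f, ⟨b, hb, f, hf, rfl⟩, fun w hw => ?_⟩
  have hbf := (PF.eqOn_act_mul hStar hF hB hb hf s).mono (NB.truncFiber_subset s Q w)
  rw [hbf.comp_left.image_eq]
  by_cases hwz : w = z
  · exact hwz ▸ hfz
  refine (hbmono _ (Finset.mem_image_of_mem _ (Finset.mem_erase.mpr ⟨hwz, hw⟩))).anti ?_
  rw [← (hfa w (ha w hw)).2]
  exact (image_comp (C ∘ NB.act b) _ _).trans_subset
    (image_mono (NB.mapsTo_act_truncFiber hFdef hf s w).image_subset)

theorem ramseyAt_trunc_iterate_of_succ (hStar : PF.CondStar) (hfin : ∀ P ∈ PF.Pam, P.Finite)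
    (hPplus : PF.CondPplus) (hd : 0 < d) (hP : P ∈ PF.Pam)
    (h : PF.RamseyAt d P (NB.trunc^[s + 1] '' P)) : PF.RamseyAt d P (NB.trunc^[s] '' P) := by
  obtain ⟨H, hH, hHmono⟩ := h
  have hHdef := (PF.bul_pointwise H P hH).1
  have hQ := (PF.bul_pointwise H P hH).2
  have hZfin := (hfin _ hQ).image NB.trunc^[s + 1]
  obtain ⟨B, hB, hBmono⟩ :=
    PF.exists_fibers_subsingleton hStar hPplus hd hZfin.toFinset hQ hZfin.coe_toFinset.subset
  refine ⟨_, (hStar B H P hH hB).2, fun C => ?_⟩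
  obtain ⟨b, hb, hbmono⟩ := hBmono C
  obtain ⟨x₀, -⟩ := PF.pam_nonempty P hP
  have : Nonempty X := ⟨x₀⟩
  -- `g z` is a point of the fibre over `z` whenever that fibre is non-empty
  let g := Function.invFunOn NB.trunc (NB.trunc^[s] '' NB.actSet H P)
  obtain ⟨h, hh, hhmono⟩ := hHmono (C ∘ NB.act b ∘ g)
  refine ⟨NB.mul b h, ⟨b, hb, h, hh, rfl⟩, ?_⟩
  rw [(PF.eqOn_act_mul hStar hH hB hb hh s).comp_left.image_eq]
  refine hhmono.anti ?_
  rintro _ ⟨u, hu, rfl⟩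
  have hfib := NB.mapsTo_act_truncFiber hHdef hh s (NB.trunc u) ⟨hu, rfl⟩
  have hu' : NB.trunc u ∈ NB.trunc^[s + 1] '' P := by
    obtain ⟨y, hy, rfl⟩ := hu
    exact ⟨y, hy, Function.iterate_succ_apply' _ _ _⟩
  refine ⟨NB.trunc u, hu', hbmono _ (hZfin.mem_toFinset.mpr ?_) ?_ ⟨_, hfib, rfl⟩⟩
  · exact NB.mapsTo_act_trunc_iterate_image hHdef hh (s + 1) hu'
  · have hne : ∃ v ∈ NB.trunc^[s] '' NB.actSet H P, NB.trunc v = NB.act h (NB.trunc u) :=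
      ⟨_, hfib.1, hfib.2⟩
    exact ⟨_, ⟨Function.invFunOn_mem hne, Function.invFunOn_eq hne⟩, rfl⟩

end PairFam

open PairFam in
/-- Abstract Ramsey theorem without conditions (A) and (B): for a pair of families over
a normed background satisfying (*), with every `P ∈ 𝓟` finite and some iterated
truncation of each `P ∈ 𝓟` a singleton, condition (P+) implies the Ramsey
condition (R). -/
theorem abstract_ramsey_plus {A X D : Type*} [LinearOrder D] {NB : NormedBackground A X D}
    (PF : PairFam NB) (hStar : CondStar PF)
    (hfin : ∀ P ∈ PF.Pam, P.Finite)
    (hsing : ∀ P ∈ PF.Pam, ∃ t : ℕ, ∃ z : X, NB.trunc^[t] '' P = {z})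
    (hPplus : CondPplus PF) : CondR PF := by
  intro d hd P hP
  obtain ⟨t, z, hz⟩ := hsing P hP
  have hR : PF.RamseyAt d P (NB.trunc^[0] '' P) :=
    Nat.decreasingInduction
      (fun _ _ h => PF.ramseyAt_trunc_iterate_of_succ hStar hfin hPplus hd hP h)
      (hz ▸ PF.ramseyAt_singleton hPplus hP z) (Nat.zero_le t)
  obtain ⟨F, hF, hFmono⟩ := hR
  refine ⟨F, (PF.bulDef_mem F P hF).1, hF, fun C => ?_⟩
  obtain ⟨f, hf, hmono⟩ := hFmono C
  obtain ⟨x₀, hx₀⟩ := PF.pam_nonempty P hP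
  exact ⟨f, hf, C (NB.act f x₀),
    fun x hx => hmono ⟨x, ⟨x, hx, rfl⟩, rfl⟩ ⟨x₀, ⟨x₀, hx₀, rfl⟩, rfl⟩⟩
end

section
/- Halpern–Läuchli theorem for strong subtrees (product version for leaves): Fix k ≥ 1 and let T^n denote the regular ordered tree of height n with branching number k. Given d > 0, t ≥ 1, and m, there exists n such that for every d-coloring of the t-fold product leaves(T^n) × ⋯ × leaves(T^n), there exists a strong sequence of leaf preserving embeddings g₁, ..., g_t : T^m → T^n such that g₁(leaves(T^m)) × ⋯ × g_t(leaves(T^m)) is monochromatic. -/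
noncomputable section
open scoped Classical

/-- A finite ordered tree: carrier `Fin card`, a tree partial order `le`
(any two elements have a meet, predecessors of any element are linearly
ordered), together with the induced lexicographic linear order `lex`
(a linear extension of `le` which does not interleave incomparable subtrees). -/
structure OTree where
  card : ℕ
  le : Fin card → Fin card → Prop
  le_refl : ∀ v, le v v
  le_antisymm : ∀ v w, le v w → le w v → v = w
  le_trans : ∀ u v w, le u v → le v w → le u w
  pred_linear : ∀ v u w, le u v → le w v → le u w ∨ le w u
  meet_exists : ∀ v w, ∃ u, le u v ∧ le u w ∧ ∀ z, le z v → le z w → le z u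
  lex : Fin card → Fin card → Prop
  lex_total : ∀ v w, lex v w ∨ lex w v
  lex_antisymm : ∀ v w, lex v w → lex w v → v = w
  lex_trans : ∀ u v w, lex u v → lex v w → lex u w
  le_lex : ∀ v w, le v w → lex v w
  lex_compat : ∀ v w v' w', ¬ le v w → ¬ le w v → lex v w → le v v' → le w w' → lex v' w'

namespace OTree

variable (T : OTree)

/-- The meet (infimum, largest common predecessor) of two nodes. -/
def meet (v w : Fin T.card) : Fin T.card := Classical.choose (T.meet_exists v w)

/-- A leaf is a maximal node. -/
def Leaf (v : Fin T.card) : Prop := ∀ w, T.le v w → w = v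

/-- `w` is an immediate successor of `v`. -/
def ImSucc (v w : Fin T.card) : Prop :=
  T.le v w ∧ v ≠ w ∧ ∀ u, T.le v u → T.le u w → u = v ∨ u = w

/-- The number of immediate successors of a node. -/
def imCard (v : Fin T.card) : ℕ := (Finset.univ.filter (fun w => T.ImSucc v w)).card

/-- The branching number `br(T)`: maximal number of immediate successors of a node. -/
def br : ℕ := Finset.univ.sup (fun v => T.imCard v)

/-- The height of a node: the number of its predecessors (itself included). -/
def ht (v : Fin T.card) : ℕ := (Finset.univ.filter (fun u => T.le u v)).card

/-- The height of the tree. -/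
def height : ℕ := Finset.univ.sup (fun v => T.ht v)

end OTree

/-- `f` is an embedding of ordered trees: an injective meet-morphism preserving
the lexicographic order, such that for every `v`, those immediate successors of `f v`
lying below an image of an immediate successor of `v` form a lex-initial segment
of the immediate successors of `f v`. -/
def IsEmb (S T : OTree) (f : Fin S.card → Fin T.card) : Prop :=
  Function.Injective f ∧
  (∀ v w, f (S.meet v w) = T.meet (f v) (f w)) ∧
  (∀ v w, S.lex v w → T.lex (f v) (f w)) ∧
  (∀ v w₁ w₂, T.ImSucc (f v) w₁ → T.ImSucc (f v) w₂ → T.lex w₁ w₂ →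
    (∃ v', S.ImSucc v v' ∧ T.le w₂ (f v')) → ∃ v', S.ImSucc v v' ∧ T.le w₁ (f v'))

/-- `f` maps leaves to leaves. -/
def LeafPres (S T : OTree) (f : Fin S.card → Fin T.card) : Prop :=
  ∀ v, S.Leaf v → T.Leaf (f v)

/-- `f` is strong: it maps nodes of equal height to nodes of equal height. -/
def Strong (S T : OTree) (f : Fin S.card → Fin T.card) : Prop :=
  ∀ v w, S.ht v = S.ht w → T.ht (f v) = T.ht (f w)

/-- The linear (chain) ordered tree with `s` nodes, i.e. `[s] = {1,…,s}`. -/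
def chainTree (s : ℕ) : OTree where
  card := s
  le := (· ≤ ·)
  le_refl := fun v => le_refl v
  le_antisymm := fun v w h1 h2 => le_antisymm h1 h2
  le_trans := fun u v w h1 h2 => le_trans h1 h2
  pred_linear := fun _ u w _ _ => le_total u w
  meet_exists := fun v w =>
    ⟨min v w, min_le_left v w, min_le_right v w, fun z h1 h2 => le_min h1 h2⟩
  lex := (· ≤ ·)
  lex_total := fun v w => le_total v w
  lex_antisymm := fun v w h1 h2 => le_antisymm h1 h2
  lex_trans := fun u v w h1 h2 => le_trans h1 h2
  le_lex := fun _ _ h => h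
  lex_compat := fun v w _ _ h1 h2 _ _ _ => absurd (le_total v w) (by tauto)

/-- `T` is the regular tree with branching number `k` and height `n`: every non-leaf
node has exactly `k` immediate successors and every leaf has height `n`. -/
def Regular (T : OTree) (k n : ℕ) : Prop :=
  (∀ v, ¬ T.Leaf v → T.imCard v = k) ∧ (∀ v, T.Leaf v → T.ht v = n) ∧ (T.card = 0 ↔ n = 0)

end

/-!
Nodes of a regular tree of branching `k` are addressed by strings over `Fin k`, children being
enumerated in lexicographic order. A map `φ` on addresses that respects branching,
`φ (q ++ a :: s) = φ q ++ a :: _`, therefore induces an embedding, which is strong and leaf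
preserving as soon as the length of `φ u` is a function of the length of `u` alone.

Read a word `w : Fin N → (Fin t → Fin M → Fin k)` as the `t`-tuple of leaves of `T^{MN+1}`
whose `i`-th address concatenates the blocks `w p i`, and take a monochromatic line `ℓ` of
this colouring (Hales–Jewett). With `p₀` the first wildcard of `ℓ` and `P i` the concatenation
of the constant `i`-th blocks before `p₀`, let `g i` send an address `u` of length `< M` to
`P i ++ u` and a leaf address `u` to the `i`-th coordinate of `ℓ u`. The length of the image
depends only on the length of `u`, and not on `i`, so the `g i` form a strong sequence; and
`(g i (leaf address u_i))_i` is the point `ℓ (u_0, …, u_{t-1})` of the line.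
-/

noncomputable section

open scoped Classical

theorem List.prefix_or_prefix_or_exists_ne {β : Type*} : ∀ s t : List β,
    s <+: t ∨ t <+: s ∨ ∃ (q : List β) (a b : β) (s' t' : List β),
      a ≠ b ∧ s = q ++ a :: s' ∧ t = q ++ b :: t'
  | [], _ => Or.inl List.nil_prefix
  | _, [] => Or.inr (Or.inl List.nil_prefix)
  | a :: s, b :: t => by
    by_cases hab : a = b
    · subst hab
      rcases prefix_or_prefix_or_exists_ne s t with h | h | ⟨q, x, y, s', t', hxy, rfl, rfl⟩
      · exact Or.inl (List.cons_prefix_cons.2 ⟨rfl, h⟩)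
      · exact Or.inr (Or.inl (List.cons_prefix_cons.2 ⟨rfl, h⟩))
      · exact Or.inr (Or.inr ⟨a :: q, x, y, s', t', hxy, rfl, rfl⟩)
    · exact Or.inr (Or.inr ⟨[], a, b, s, t, hab, rfl, rfl⟩)

theorem List.exists_ofFn_eq {β : Type*} {M : ℕ} {u : List β} (hu : u.length = M) :
    ∃ x : Fin M → β, List.ofFn x = u :=
  ⟨fun j => u[j.1], by subst hu; exact List.ofFn_getElem⟩

def BranchPreserving {β : Type*} (M : ℕ) (φ : List β → List β) : Prop :=
  ∀ q a s, (q ++ a :: s).length ≤ M → ∃ s', φ (q ++ a :: s) = φ q ++ a :: s'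

namespace BranchPreserving

variable {β : Type*} {M : ℕ} {φ : List β → List β} (hφ : BranchPreserving M φ)
include hφ

theorem isPrefix {u u' : List β} (h : u <+: u') (hu' : u'.length ≤ M) : φ u <+: φ u' := by
  obtain ⟨_ | ⟨a, s⟩, rfl⟩ := h
  · simp
  · obtain ⟨s', hs'⟩ := hφ u a s hu'
    exact ⟨a :: s', hs'.symm⟩

theorem length_lt {u a s} (h : (u ++ a :: s).length ≤ M) :
    (φ u).length < (φ (u ++ a :: s)).length := by
  obtain ⟨s', hs'⟩ := hφ u a s h
  simp [hs']

theorem injOn {u u' : List β} (hu : u.length ≤ M) (hu' : u'.length ≤ M) (h : φ u = φ u') :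
    u = u' := by
  rcases List.prefix_or_prefix_or_exists_ne u u' with
    ⟨_ | ⟨a, s⟩, rfl⟩ | ⟨_ | ⟨a, s⟩, rfl⟩ | ⟨q, a, b, s, t, hab, rfl, rfl⟩
  · simp
  · exact absurd (congrArg List.length h) (hφ.length_lt hu').ne
  · simp
  · exact absurd (congrArg List.length h) (hφ.length_lt hu).ne'
  · obtain ⟨s', hs'⟩ := hφ q a s hu
    obtain ⟨t', ht'⟩ := hφ q b t hu'
    rw [hs', ht', List.append_cancel_left_eq, List.cons.injEq] at h
    exact absurd h.1 hab

end BranchPreserving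

namespace OTree

variable {T : OTree}

theorem meet_le_left (v w : Fin T.card) : T.le (T.meet v w) v :=
  (Classical.choose_spec (T.meet_exists v w)).1

theorem meet_le_right (v w : Fin T.card) : T.le (T.meet v w) w :=
  (Classical.choose_spec (T.meet_exists v w)).2.1

theorem le_meet {u v w : Fin T.card} (hv : T.le u v) (hw : T.le u w) : T.le u (T.meet v w) :=
  (Classical.choose_spec (T.meet_exists v w)).2.2 u hv hw

theorem lex_refl (T : OTree) (v : Fin T.card) : T.lex v v := (T.lex_total v v).elim id id

theorem meet_eq_left_of_le {v w : Fin T.card} (h : T.le v w) : T.meet v w = v :=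
  T.le_antisymm _ _ (meet_le_left v w) (le_meet (T.le_refl v) h)

theorem meet_eq_right_of_le {v w : Fin T.card} (h : T.le w v) : T.meet v w = w :=
  T.le_antisymm _ _ (meet_le_right v w) (le_meet h (T.le_refl w))

theorem ht_mono {u v : Fin T.card} (h : T.le u v) : T.ht u ≤ T.ht v :=
  Finset.card_le_card fun x hx => by
    simp only [Finset.mem_filter, Finset.mem_univ, true_and] at hx ⊢
    exact T.le_trans _ _ _ hx h

theorem ht_lt_ht {u v : Fin T.card} (h : T.le u v) (hne : u ≠ v) : T.ht u < T.ht v := by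
  refine Finset.card_lt_card ⟨fun x hx => ?_, fun hsub => hne ?_⟩
  · simp only [Finset.mem_filter, Finset.mem_univ, true_and] at hx ⊢
    exact T.le_trans _ _ _ hx h
  · have hv : T.le v u := by simpa using hsub (by simpa using T.le_refl v)
    exact T.le_antisymm _ _ h hv

theorem eq_of_le_of_ht_le {u v : Fin T.card} (h : T.le u v) (hht : T.ht v ≤ T.ht u) : u = v :=
  by_contra fun hne => (ht_lt_ht h hne).not_ge hht

theorem one_le_ht (v : Fin T.card) : 1 ≤ T.ht v :=
  Finset.card_pos.2 ⟨v, by simpa using T.le_refl v⟩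

theorem exists_leaf_ge (v : Fin T.card) : ∃ w, T.le v w ∧ T.Leaf w := by
  obtain ⟨w, hw, hmax⟩ := Finset.exists_max_image (Finset.univ.filter (T.le v)) T.ht
    ⟨v, by simpa using T.le_refl v⟩
  simp only [Finset.mem_filter, Finset.mem_univ, true_and] at hw hmax
  exact ⟨w, hw, fun w' hw' =>
    (eq_of_le_of_ht_le hw' (hmax w' (T.le_trans _ _ _ hw hw'))).symm⟩

theorem exists_root (h : 0 < T.card) : ∃ r : Fin T.card, ∀ v, T.le r v := by
  obtain ⟨r, -, hmin⟩ :=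
    Finset.exists_min_image Finset.univ T.ht ⟨⟨0, h⟩, Finset.mem_univ _⟩
  refine ⟨r, fun v => ?_⟩
  rw [← eq_of_le_of_ht_le (meet_le_left r v) (hmin _ (Finset.mem_univ _))]
  exact meet_le_right r v

theorem ht_root {r : Fin T.card} (hr : ∀ v, T.le r v) : T.ht r = 1 := by
  rw [ht, Finset.card_eq_one]
  refine ⟨r, Finset.ext fun u => ?_⟩
  simpa using ⟨fun hu => T.le_antisymm _ _ hu (hr u), fun h => h ▸ T.le_refl u⟩

theorem Leaf.eq_of_le {v w : Fin T.card} (hv : T.Leaf v) (h : T.le v w) : v = w :=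
  (hv w h).symm

theorem exists_imSucc_le {v w : Fin T.card} (hvw : T.le v w) (hne : v ≠ w) :
    ∃ c, T.ImSucc v c ∧ T.le c w := by
  obtain ⟨c, hc, hmin⟩ := Finset.exists_min_image
    (Finset.univ.filter fun u => T.le v u ∧ T.le u w ∧ u ≠ v) T.ht
    ⟨w, by simpa [hvw, T.le_refl w] using hne.symm⟩
  simp only [Finset.mem_filter, Finset.mem_univ, true_and, and_imp] at hc hmin
  refine ⟨c, ⟨hc.1, hc.2.2.symm, fun u hvu huc => or_iff_not_imp_left.2 fun huv => ?_⟩,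
    hc.2.1⟩
  exact eq_of_le_of_ht_le huc (hmin u hvu (T.le_trans _ _ _ huc hc.2.1) huv)

theorem ImSucc.ht_eq {v c : Fin T.card} (h : T.ImSucc v c) : T.ht c = T.ht v + 1 := by
  have hnot : c ∉ Finset.univ.filter (T.le · v) := by
    simpa using fun hcv => h.2.1 (T.le_antisymm _ _ h.1 hcv)
  rw [ht, ht, ← Finset.card_insert_of_notMem hnot]
  congr 1
  ext u
  simp only [Finset.mem_filter, Finset.mem_univ, true_and, Finset.mem_insert]
  refine ⟨fun huc => ?_, ?_⟩
  · rcases T.pred_linear c u v huc h.1 with huv | hvu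
    · exact Or.inr huv
    · rcases h.2.2 u hvu huc with rfl | rfl
      · exact Or.inr (T.le_refl u)
      · exact Or.inl rfl
  · rintro (rfl | huv)
    · exact T.le_refl _
    · exact T.le_trans _ _ _ huv h.1

theorem ImSucc.eq_of_le {v c c' w : Fin T.card} (hc : T.ImSucc v c) (hc' : T.ImSucc v c')
    (hcw : T.le c w) (hc'w : T.le c' w) : c = c' := by
  have hht : T.ht c = T.ht c' := by rw [hc.ht_eq, hc'.ht_eq]
  rcases T.pred_linear w c c' hcw hc'w with h | h
  · exact eq_of_le_of_ht_le h hht.ge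
  · exact (eq_of_le_of_ht_le h hht.le).symm

theorem ImSucc.not_le {v c c' : Fin T.card} (hc : T.ImSucc v c) (hc' : T.ImSucc v c')
    (hne : c ≠ c') : ¬ T.le c c' :=
  fun h => hne (eq_of_le_of_ht_le h (by rw [hc.ht_eq, hc'.ht_eq]))

theorem meet_eq_of_imSucc {u c c' v w : Fin T.card} (hc : T.ImSucc u c) (hc' : T.ImSucc u c')
    (hne : c ≠ c') (hcv : T.le c v) (hc'w : T.le c' w) : T.meet v w = u := by
  have hu : T.le u (T.meet v w) :=
    le_meet (T.le_trans _ _ _ hc.1 hcv) (T.le_trans _ _ _ hc'.1 hc'w)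
  by_contra hmu
  obtain ⟨d, hd, hdm⟩ := exists_imSucc_le hu (Ne.symm hmu)
  have hdc : d = c := hd.eq_of_le hc (T.le_trans _ _ _ hdm (meet_le_left v w)) hcv
  have hdc' : d = c' := hd.eq_of_le hc' (T.le_trans _ _ _ hdm (meet_le_right v w)) hc'w
  exact hne (hdc.symm.trans hdc')

abbrev lexOrder (T : OTree) : LinearOrder (Fin T.card) where
  le := T.lex
  lt a b := T.lex a b ∧ ¬ T.lex b a
  le_refl := T.lex_refl
  le_trans := T.lex_trans
  lt_iff_le_not_ge _ _ := Iff.rfl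
  le_antisymm := T.lex_antisymm
  le_total := T.lex_total
  min a b := if T.lex a b then a else b
  max a b := if T.lex a b then b else a
  compare a b := if T.lex a b ∧ ¬ T.lex b a then .lt else if a = b then .eq else .gt
  toDecidableLE := inferInstance
  compare_eq_compareOfLessAndEq _ _ := rfl

def children (T : OTree) (v : Fin T.card) : Finset (Fin T.card) :=
  Finset.univ.filter (T.ImSucc v)

/-- The `a`-th immediate successor of `v` in lexicographic order; `v` itself unless `v` has
exactly `k` immediate successors. -/
def child (T : OTree) (k : ℕ) (v : Fin T.card) (a : Fin k) : Fin T.card :=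
  letI := T.lexOrder
  if hc : (T.children v).card = k then (T.children v).orderEmbOfFin hc a else v

section Child

variable {k : ℕ} {v : Fin T.card} (hv : (T.children v).card = k)
include hv

theorem imSucc_child (a : Fin k) : T.ImSucc v (T.child k v a) := by
  let := T.lexOrder
  rw [child, dif_pos hv]
  exact (Finset.mem_filter.1 (Finset.orderEmbOfFin_mem _ hv a)).2

theorem child_injective : Function.Injective (T.child k v) := by
  let := T.lexOrder
  intro a b hab
  simp only [child, dif_pos hv] at hab
  exact (Finset.orderEmbOfFin _ hv).injective hab

theorem lex_child_of_lt {a b : Fin k} (hab : a < b) : T.lex (T.child k v a) (T.child k v b) := by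
  let := T.lexOrder
  simp only [child, dif_pos hv]
  exact (Finset.orderEmbOfFin _ hv).map_rel_iff.2 hab.le

theorem exists_child_eq {c : Fin T.card} (hc : T.ImSucc v c) : ∃ a, T.child k v a = c := by
  let := T.lexOrder
  have : c ∈ Set.range ((T.children v).orderEmbOfFin hv) := by
    rw [Finset.range_orderEmbOfFin]
    simpa [children] using hc
  obtain ⟨a, ha⟩ := this
  exact ⟨a, by rw [child, dif_pos hv, ha]⟩

end Child

theorem le_child (k : ℕ) (v : Fin T.card) (a : Fin k) : T.le v (T.child k v a) := by
  by_cases hv : (T.children v).card = k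
  · exact (imSucc_child hv a).1
  · rw [child, dif_neg hv]
    exact T.le_refl v

end OTree

namespace Regular

variable {T : OTree} {k h : ℕ} (hT : Regular T k h)
include hT

theorem ht_le (v : Fin T.card) : T.ht v ≤ h := by
  obtain ⟨w, hvw, hw⟩ := T.exists_leaf_ge v
  exact (OTree.ht_mono hvw).trans (hT.2.1 w hw).le

theorem leaf_iff {v : Fin T.card} : T.Leaf v ↔ T.ht v = h := by
  refine ⟨hT.2.1 v, fun hv => ?_⟩
  obtain ⟨w, hvw, hw⟩ := T.exists_leaf_ge v
  rwa [OTree.eq_of_le_of_ht_le hvw (by rw [hv, hT.2.1 w hw])]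

theorem card_children {v : Fin T.card} (hv : T.ht v < h) : (T.children v).card = k :=
  hT.1 v fun hl => (hT.leaf_iff.1 hl ▸ hv).false

theorem exists_root (hh : 0 < h) : ∃ r : Fin T.card, ∀ v, T.le r v :=
  OTree.exists_root (Nat.pos_of_ne_zero fun h0 => hh.ne' (hT.2.2.1 h0))

end Regular


namespace OTree

variable {T : OTree} {k : ℕ}

def node (T : OTree) (k : ℕ) (r : Fin T.card) (s : List (Fin k)) : Fin T.card :=
  s.foldl (T.child k) r

theorem node_concat (r : Fin T.card) (s : List (Fin k)) (a : Fin k) :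
    T.node k r (s ++ [a]) = T.child k (T.node k r s) a := by
  simp [node]

theorem node_le_node_of_prefix {r : Fin T.card} {s t : List (Fin k)} (hst : s <+: t) :
    T.le (T.node k r s) (T.node k r t) := by
  obtain ⟨u, rfl⟩ := hst
  induction u using List.reverseRecOn with
  | nil => simpa using T.le_refl _
  | append_singleton u a ih =>
    rw [← List.append_assoc, node_concat]
    exact T.le_trans _ _ _ ih (le_child k _ a)

def addr (T : OTree) (k : ℕ) (r v : Fin T.card) : List (Fin k) :=
  Classical.epsilon fun s : List (Fin k) => s.length + 1 = T.ht v ∧ T.node k r s = v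

section Regular

variable {h : ℕ} (hT : Regular T k h) {r : Fin T.card} (hr : ∀ v, T.le r v)
include hT hr

theorem ht_node {s : List (Fin k)} (hs : s.length < h) : T.ht (T.node k r s) = s.length + 1 := by
  induction s using List.reverseRecOn with
  | nil => exact ht_root hr
  | append_singleton s a ih =>
    rw [List.length_append, List.length_singleton] at hs ⊢
    have hs' := ih (by omega)
    rw [node_concat, (imSucc_child (hT.card_children (by omega)) a).ht_eq, hs']

theorem imSucc_node_concat {s : List (Fin k)} (hs : s.length + 1 < h) (a : Fin k) :
    T.ImSucc (T.node k r s) (T.node k r (s ++ [a])) := by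
  rw [node_concat]
  exact imSucc_child (hT.card_children (by rw [ht_node hT hr (by omega)]; omega)) a

theorem exists_node_append_eq {v : Fin T.card} :
    ∀ (D : ℕ) (s : List (Fin k)), T.ht v = s.length + 1 + D → T.le (T.node k r s) v →
      ∃ u : List (Fin k), u.length = D ∧ T.node k r (s ++ u) = v := by
  intro D
  induction D with
  | zero =>
    intro s hv hsv
    refine ⟨[], rfl, ?_⟩
    rw [List.append_nil]
    exact eq_of_le_of_ht_le hsv (by rw [hv, ht_node hT hr (by have := hT.ht_le v; omega)])
  | succ D ih =>
    intro s hv hsv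
    have hs : T.ht (T.node k r s) = s.length + 1 := ht_node hT hr (by have := hT.ht_le v; omega)
    have hne : T.node k r s ≠ v := fun he => by rw [he] at hs; omega
    obtain ⟨c, hc, hcv⟩ := exists_imSucc_le hsv hne
    obtain ⟨a, rfl⟩ := exists_child_eq (hT.card_children (by have := hT.ht_le v; omega)) hc
    obtain ⟨u, hu, hnu⟩ := ih (s ++ [a]) (by simp; omega) (by rwa [node_concat])
    exact ⟨a :: u, by simp [hu], by simpa using hnu⟩

theorem exists_node_eq (v : Fin T.card) :
    ∃ s : List (Fin k), s.length + 1 = T.ht v ∧ T.node k r s = v := by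
  have := one_le_ht v
  obtain ⟨s, hs, hsv⟩ := exists_node_append_eq hT hr (T.ht v - 1) [] (by simp; omega) (hr v)
  exact ⟨s, by omega, hsv⟩

theorem node_injOn {s t : List (Fin k)} (hs : s.length < h) (ht : t.length < h)
    (hst : T.node k r s = T.node k r t) : s = t := by
  have hlen : s.length = t.length := by
    have := ht_node hT hr hs
    rw [hst, ht_node hT hr ht] at this
    omega
  rcases List.prefix_or_prefix_or_exists_ne s t with h | h | ⟨q, a, b, s', t', hab, rfl, rfl⟩
  · exact h.eq_of_length hlen
  · exact (h.eq_of_length hlen.symm).symm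
  · exfalso
    simp only [List.length_append, List.length_cons] at hs ht
    have hq : T.ht (T.node k r q) < h := by rw [ht_node hT hr (by omega)]; omega
    refine hab (child_injective (hT.card_children hq) ?_)
    simp only [← node_concat]
    have hb : T.le (T.node k r (q ++ [b])) (T.node k r (q ++ a :: s')) :=
      hst ▸ node_le_node_of_prefix (by simp)
    exact (imSucc_node_concat hT hr (s := q) (by omega) a).eq_of_le
      (imSucc_node_concat hT hr (s := q) (by omega) b) (node_le_node_of_prefix (by simp)) hb

theorem addr_spec (v : Fin T.card) :
    (T.addr k r v).length + 1 = T.ht v ∧ T.node k r (T.addr k r v) = v :=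
  Classical.epsilon_spec (exists_node_eq hT hr v)

theorem length_addr_lt (v : Fin T.card) : (T.addr k r v).length < h := by
  have := hT.ht_le v
  have := (addr_spec hT hr v).1
  omega

theorem addr_node {s : List (Fin k)} (hs : s.length < h) : T.addr k r (T.node k r s) = s :=
  node_injOn hT hr (length_addr_lt hT hr _) hs (addr_spec hT hr _).2

theorem meet_node_of_ne {q s t : List (Fin k)} {a b : Fin k} (hab : a ≠ b)
    (hs : (q ++ a :: s).length < h) :
    T.meet (T.node k r (q ++ a :: s)) (T.node k r (q ++ b :: t)) = T.node k r q := by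
  simp only [List.length_append, List.length_cons] at hs
  have hq : T.ht (T.node k r q) < h := by rw [ht_node hT hr (by omega)]; omega
  refine meet_eq_of_imSucc (imSucc_node_concat hT hr (s := q) (by omega) a)
    (imSucc_node_concat hT hr (s := q) (by omega) b) ?_ (node_le_node_of_prefix (by simp))
    (node_le_node_of_prefix (by simp))
  simpa only [node_concat] using (child_injective (hT.card_children hq)).ne hab

theorem lex_node_of_lt {q s t : List (Fin k)} {a b : Fin k} (hab : a < b)
    (hs : (q ++ a :: s).length < h) :
    T.lex (T.node k r (q ++ a :: s)) (T.node k r (q ++ b :: t)) := by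
  simp only [List.length_append, List.length_cons] at hs
  have hq : T.ht (T.node k r q) < h := by rw [ht_node hT hr (by omega)]; omega
  have hca := imSucc_node_concat hT hr (s := q) (by omega) a
  have hcb := imSucc_node_concat hT hr (s := q) (by omega) b
  have hne : T.node k r (q ++ [a]) ≠ T.node k r (q ++ [b]) := by
    simpa only [node_concat] using (child_injective (hT.card_children hq)).ne hab.ne
  refine T.lex_compat _ _ _ _ (hca.not_le hcb hne) (hcb.not_le hca hne.symm) ?_
    (node_le_node_of_prefix (by simp)) (node_le_node_of_prefix (by simp))
  simpa only [node_concat] using lex_child_of_lt (hT.card_children hq) hab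

end Regular

end OTree


namespace OTree

def liftMap (S T : OTree) (k : ℕ) (rS : Fin S.card) (rT : Fin T.card)
    (φ : List (Fin k) → List (Fin k)) (v : Fin S.card) : Fin T.card :=
  T.node k rT (φ (S.addr k rS v))

section LiftMap

variable {S T : OTree} {k M : ℕ} {L : ℕ → ℕ} (hS : Regular S k (M + 1))
  (hT : Regular T k (L M + 1)) {rS : Fin S.card} (hrS : ∀ v, S.le rS v) {rT : Fin T.card}
  (hrT : ∀ v, T.le rT v) {φ : List (Fin k) → List (Fin k)} (hφ : BranchPreserving M φ)
  (hL : ∀ u : List (Fin k), u.length ≤ M → (φ u).length = L u.length)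
  (hLM : ∀ j ≤ M, L j ≤ L M)

include hS hrS in
theorem exists_node_eq_length_le (v : Fin S.card) :
    ∃ u : List (Fin k), u.length ≤ M ∧ S.node k rS u = v := by
  obtain ⟨u, hu, huv⟩ := exists_node_eq hS hrS v
  exact ⟨u, by have := hS.ht_le v; omega, huv⟩

include hL hLM in
theorem length_lt_of_length_le {u : List (Fin k)} (hu : u.length ≤ M) :
    (φ u).length < L M + 1 := by
  rw [hL u hu]
  exact Nat.lt_succ_of_le (hLM _ hu)

include hS hrS in
theorem liftMap_node {u : List (Fin k)} (hu : u.length ≤ M) :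
    S.liftMap T k rS rT φ (S.node k rS u) = T.node k rT (φ u) := by
  rw [liftMap, addr_node hS hrS (by omega)]

include hS hT hrS hrT hL hLM

theorem ht_liftMap (v : Fin S.card) : T.ht (S.liftMap T k rS rT φ v) = L (S.ht v - 1) + 1 := by
  obtain ⟨u, hu, rfl⟩ := exists_node_eq_length_le hS hrS v
  rw [liftMap_node hS hrS hu, ht_node hT hrT (length_lt_of_length_le hL hLM hu), hL u hu,
    ht_node hS hrS (by omega), Nat.add_sub_cancel]

include hφ

theorem liftMap_injective : Function.Injective (S.liftMap T k rS rT φ) := by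
  intro v w hvw
  obtain ⟨u, hu, rfl⟩ := exists_node_eq_length_le hS hrS v
  obtain ⟨u', hu', rfl⟩ := exists_node_eq_length_le hS hrS w
  rw [liftMap_node hS hrS hu, liftMap_node hS hrS hu'] at hvw
  rw [hφ.injOn hu hu' (node_injOn hT hrT (length_lt_of_length_le hL hLM hu)
    (length_lt_of_length_le hL hLM hu') hvw)]

theorem liftMap_meet (v w : Fin S.card) :
    S.liftMap T k rS rT φ (S.meet v w) =
      T.meet (S.liftMap T k rS rT φ v) (S.liftMap T k rS rT φ w) := by
  obtain ⟨u, hu, rfl⟩ := exists_node_eq_length_le hS hrS v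
  obtain ⟨u', hu', rfl⟩ := exists_node_eq_length_le hS hrS w
  rw [liftMap_node hS hrS hu, liftMap_node hS hrS hu']
  rcases List.prefix_or_prefix_or_exists_ne u u' with h | h | ⟨q, a, b, s, t, hab, rfl, rfl⟩
  · rw [meet_eq_left_of_le (node_le_node_of_prefix h), liftMap_node hS hrS hu,
      meet_eq_left_of_le (node_le_node_of_prefix (hφ.isPrefix h hu'))]
  · rw [meet_eq_right_of_le (node_le_node_of_prefix h), liftMap_node hS hrS hu',
      meet_eq_right_of_le (node_le_node_of_prefix (hφ.isPrefix h hu))]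
  · obtain ⟨s', hs'⟩ := hφ q a s hu
    obtain ⟨t', ht'⟩ := hφ q b t hu'
    have hq : q.length ≤ M := by simp at hu; omega
    rw [meet_node_of_ne hS hrS hab (by omega), liftMap_node hS hrS hq, hs', ht',
      meet_node_of_ne hT hrT hab (hs' ▸ length_lt_of_length_le hL hLM hu)]

theorem lex_liftMap {v w : Fin S.card} (hvw : S.lex v w) :
    T.lex (S.liftMap T k rS rT φ v) (S.liftMap T k rS rT φ w) := by
  suffices h : T.lex (S.liftMap T k rS rT φ v) (S.liftMap T k rS rT φ w) ∨ S.lex w v by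
    rcases h with h | hwv
    · exact h
    · rw [S.lex_antisymm v w hvw hwv]
      exact T.lex_refl _
  obtain ⟨u, hu, rfl⟩ := exists_node_eq_length_le hS hrS v
  obtain ⟨u', hu', rfl⟩ := exists_node_eq_length_le hS hrS w
  rw [liftMap_node hS hrS hu, liftMap_node hS hrS hu']
  rcases List.prefix_or_prefix_or_exists_ne u u' with h | h | ⟨q, a, b, s, t, hab, rfl, rfl⟩
  · exact Or.inl (T.le_lex _ _ (node_le_node_of_prefix (hφ.isPrefix h hu')))
  · exact Or.inr (S.le_lex _ _ (node_le_node_of_prefix h))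
  · obtain ⟨s', hs'⟩ := hφ q a s hu
    obtain ⟨t', ht'⟩ := hφ q b t hu'
    rcases lt_or_gt_of_ne hab with hab | hba
    · left
      rw [hs', ht']
      exact lex_node_of_lt hT hrT hab (hs' ▸ length_lt_of_length_le hL hLM hu)
    · exact Or.inr (lex_node_of_lt hS hrS hba (by omega))

omit hrT hL hLM in
theorem exists_imSucc_le_liftMap {v : Fin S.card} (hv : ¬ S.Leaf v) {w : Fin T.card}
    (hw : T.ImSucc (S.liftMap T k rS rT φ v) w) :
    ∃ v', S.ImSucc v v' ∧ T.le w (S.liftMap T k rS rT φ v') := by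
  obtain ⟨u, hu, rfl⟩ := exists_node_eq_length_le hS hrS v
  have huM : u.length < M := by
    rw [hS.leaf_iff, ht_node hS hrS (by omega)] at hv
    omega
  rw [liftMap_node hS hrS hu] at hw
  have hnl : T.ht (T.node k rT (φ u)) < L M + 1 := (ht_lt_ht hw.1 hw.2.1).trans_le (hT.ht_le w)
  obtain ⟨a, rfl⟩ := exists_child_eq (hT.card_children hnl) hw
  obtain ⟨s', hs'⟩ := hφ u a [] (by simp; omega)
  refine ⟨S.node k rS (u ++ [a]), imSucc_node_concat hS hrS (by omega) a, ?_⟩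
  rw [liftMap_node hS hrS (by simp; omega), hs', ← node_concat]
  exact node_le_node_of_prefix (by simp)

theorem isEmb_liftMap : IsEmb S T (S.liftMap T k rS rT φ) := by
  refine ⟨liftMap_injective hS hT hrS hrT hφ hL hLM, liftMap_meet hS hT hrS hrT hφ hL hLM,
    fun v w => lex_liftMap hS hT hrS hrT hφ hL hLM, ?_⟩
  rintro v w₁ - hw₁ - - ⟨v', hv', -⟩
  exact exists_imSucc_le_liftMap hS hT hrS hφ
    (fun hl => hv'.2.1 (hl.eq_of_le hv'.1)) hw₁

omit hφ

theorem strong_liftMap : Strong S T (S.liftMap T k rS rT φ) := fun v w h => by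
  rw [ht_liftMap hS hT hrS hrT hL hLM, ht_liftMap hS hT hrS hrT hL hLM, h]

theorem leafPres_liftMap : LeafPres S T (S.liftMap T k rS rT φ) := fun v hv => by
  rw [hT.leaf_iff, ht_liftMap hS hT hrS hrT hL hLM, hS.leaf_iff.1 hv, Nat.add_sub_cancel]

end LiftMap

end OTree

def wordString {β : Type*} {t M N : ℕ} (w : Fin N → Fin t → Fin M → β) (i : Fin t) :
    List β :=
  (List.ofFn fun p => List.ofFn (w p i)).flatten

theorem length_wordString {β : Type*} {t M N : ℕ} (w : Fin N → Fin t → Fin M → β)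
    (i : Fin t) : (wordString w i).length = N * M := by
  simp [wordString, List.length_flatten, List.sum_ofFn]

namespace Combinatorics.Line

theorem exists_mono_in_fin_dimension (α : Type*) [Finite α] (κ : Type*) [Finite κ] :
    ∃ N, ∀ C : (Fin N → α) → κ, ∃ l : Line α (Fin N), l.IsMono C := by
  obtain ⟨ι, _, hι⟩ := exists_mono_in_high_dimension α κ
  refine ⟨Fintype.card ι, fun C => ?_⟩
  let e := Fintype.equivFin ι
  obtain ⟨l, c, hc⟩ := hι fun x => C (x ∘ e.symm)
  obtain ⟨i, hi⟩ := l.proper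
  exact ⟨⟨l.idxFun ∘ e.symm, e i, by simpa using hi⟩, c, hc⟩

variable {α : Type*} {N : ℕ}

def firstWild (ℓ : Line α (Fin N)) : Fin N :=
  wellFounded_lt.min {p | ℓ.idxFun p = none} ℓ.proper

theorem idxFun_firstWild (ℓ : Line α (Fin N)) : ℓ.idxFun ℓ.firstWild = none :=
  wellFounded_lt.min_mem {p | ℓ.idxFun p = none} ℓ.proper

theorem firstWild_le (ℓ : Line α (Fin N)) {p : Fin N} (hp : ℓ.idxFun p = none) :
    ℓ.firstWild ≤ p :=
  not_lt.1 (wellFounded_lt.not_lt_min {p | ℓ.idxFun p = none} hp)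

theorem exists_idxFun_eq_some (ℓ : Line α (Fin N)) {p : Fin N} (hp : p < ℓ.firstWild) :
    ∃ a, ℓ.idxFun p = some a :=
  Option.ne_none_iff_exists'.1 fun h => (ℓ.firstWild_le h).not_gt hp

variable {β : Type*} {t M N : ℕ} (ℓ : Line (Fin t → Fin M → β) (Fin N)) (i : Fin t)

/-- The blocks of `wordString (ℓ x) i`, with the string `z` in place of the wildcard blocks. -/
def blocks (z : List β) : List (List β) :=
  List.ofFn fun p => ((ℓ.idxFun p).map fun a => List.ofFn (a i)).getD z

def fixedPrefix : List β :=
  ((ℓ.blocks i []).take ℓ.firstWild).flatten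

def stringMap (u : List β) : List β :=
  if u.length = M then (ℓ.blocks i u).flatten else ℓ.fixedPrefix i ++ u

theorem flatten_blocks_ofFn (x : Fin t → Fin M → β) :
    (ℓ.blocks i (List.ofFn (x i))).flatten = wordString (ℓ x) i := by
  unfold blocks wordString
  congr 1
  refine List.ofFn_inj.2 (funext fun p => ?_)
  rcases h : ℓ.idxFun p with _ | a <;> simp [h]

theorem take_blocks (z : List β) :
    (ℓ.blocks i z).take ℓ.firstWild = (ℓ.blocks i []).take ℓ.firstWild := by
  refine List.ext_getElem (by simp [blocks]) fun q hq _ => ?_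
  simp only [List.getElem_take, blocks, List.getElem_ofFn]
  simp only [List.length_take, blocks, List.length_ofFn] at hq
  obtain ⟨a, ha⟩ :=
    ℓ.exists_idxFun_eq_some (p := ⟨q, by omega⟩) (Fin.mk_lt_of_lt_val (by omega))
  simp [ha]

theorem flatten_blocks (z : List β) : (ℓ.blocks i z).flatten =
    ℓ.fixedPrefix i ++ z ++ ((ℓ.blocks i z).drop (ℓ.firstWild + 1)).flatten := by
  have hlt : (ℓ.firstWild : ℕ) < (ℓ.blocks i z).length := by simp [blocks]
  conv_lhs => rw [← List.take_append_drop ℓ.firstWild (ℓ.blocks i z),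
    List.drop_eq_getElem_cons hlt, take_blocks]
  simp [fixedPrefix, blocks, idxFun_firstWild]

theorem length_fixedPrefix : (ℓ.fixedPrefix i).length = ℓ.firstWild * M := by
  have hrep : ((ℓ.blocks i []).take ℓ.firstWild).map List.length =
      List.replicate ℓ.firstWild M := by
    refine List.eq_replicate_iff.2 ⟨by simp [blocks], fun n hn => ?_⟩
    obtain ⟨b, hb, rfl⟩ := List.mem_map.1 hn
    obtain ⟨q, hq, rfl⟩ := List.mem_take_iff_getElem.1 hb
    simp only [blocks, List.length_ofFn, List.getElem_ofFn] at hq ⊢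
    obtain ⟨a, ha⟩ :=
      ℓ.exists_idxFun_eq_some (p := ⟨q, by omega⟩) (Fin.mk_lt_of_lt_val (by omega))
    simp [ha]
  rw [fixedPrefix, List.length_flatten, hrep, List.sum_replicate, smul_eq_mul]

theorem stringMap_ofFn (x : Fin t → Fin M → β) :
    ℓ.stringMap i (List.ofFn (x i)) = wordString (ℓ x) i := by
  rw [stringMap, if_pos (List.length_ofFn), flatten_blocks_ofFn]

theorem exists_stringMap_eq_append (u : List β) :
    ∃ e, ℓ.stringMap i u = ℓ.fixedPrefix i ++ u ++ e := by
  unfold stringMap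
  split_ifs
  · exact ⟨_, flatten_blocks ℓ i u⟩
  · exact ⟨[], by simp⟩

theorem branchPreserving_stringMap : BranchPreserving M (ℓ.stringMap i) := by
  intro q a s hs
  obtain ⟨e, he⟩ := ℓ.exists_stringMap_eq_append i (q ++ a :: s)
  have hq : q.length ≠ M := by simp at hs; omega
  refine ⟨s ++ e, ?_⟩
  rw [he, stringMap, if_neg hq]
  simp

def stringLength (ℓ : Line (Fin t → Fin M → β) (Fin N)) (j : ℕ) : ℕ :=
  if j = M then N * M else ℓ.firstWild * M + j

theorem length_stringMap (u : List β) :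
    (ℓ.stringMap i u).length = ℓ.stringLength u.length := by
  unfold stringMap stringLength
  split_ifs with hu
  · obtain ⟨x, rfl⟩ := List.exists_ofFn_eq hu
    simpa [flatten_blocks_ofFn ℓ i (fun _ => x)] using length_wordString (ℓ fun _ => x) i
  · simp [length_fixedPrefix]

theorem stringLength_le {j : ℕ} (hj : j ≤ M) : ℓ.stringLength j ≤ ℓ.stringLength M := by
  unfold stringLength
  rw [if_pos rfl]
  split_ifs
  · rfl
  · have := Nat.mul_le_mul_right M ℓ.firstWild.isLt
    rw [Nat.succ_mul] at this
    omega

end Combinatorics.Line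

open Combinatorics OTree

def IsMonoStrongSeq (S T : OTree) {t : ℕ} {κ : Type*} (C : (Fin t → Fin T.card) → κ)
    (g : Fin t → Fin S.card → Fin T.card) : Prop :=
  (∀ i, IsEmb S T (g i) ∧ Strong S T (g i) ∧ LeafPres S T (g i)) ∧
  (∀ i j x y, S.Leaf x → S.Leaf y →
    T.ht (T.meet (g i x) (g i y)) = T.ht (T.meet (g j x) (g j y))) ∧
  ∃ c, ∀ p : Fin t → Fin S.card, (∀ i, S.Leaf (p i)) → C (fun i => g i (p i)) = c

theorem exists_isMonoStrongSeq_of_card_eq_zero {S T : OTree} {t : ℕ} {κ : Type*}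
    (hS : S.card = 0) (v : Fin T.card) (C : (Fin t → Fin T.card) → κ) :
    ∃ g, IsMonoStrongSeq S T C g := by
  have : IsEmpty (Fin S.card) := hS ▸ Fin.isEmpty'
  exact ⟨fun _ _ => v, fun _ => ⟨⟨isEmptyElim, isEmptyElim, isEmptyElim, isEmptyElim⟩,
    isEmptyElim, isEmptyElim⟩, fun _ _ x => isEmptyElim x, C fun _ => v, fun _ _ => rfl⟩

theorem exists_isMonoStrongSeq_of_isMono {S T : OTree} {k t M N : ℕ} {κ : Type*}
    (hS : Regular S k (M + 1)) (hT : Regular T k (M * N + 1)) {rS : Fin S.card}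
    (hrS : ∀ v, S.le rS v) {rT : Fin T.card} (hrT : ∀ v, T.le rT v)
    (C : (Fin t → Fin T.card) → κ) (ℓ : Line (Fin t → Fin M → Fin k) (Fin N))
    (hℓ : ℓ.IsMono fun w => C fun i => T.node k rT (wordString w i)) :
    ∃ g, IsMonoStrongSeq S T C g := by
  have hT' : Regular T k (ℓ.stringLength M + 1) := by
    rwa [Line.stringLength, if_pos rfl, Nat.mul_comm]
  have hL (i : Fin t) (u : List (Fin k)) (_ : u.length ≤ M) := ℓ.length_stringMap i u
  have hLM (j : ℕ) := ℓ.stringLength_le (j := j)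
  refine ⟨fun i => S.liftMap T k rS rT (ℓ.stringMap i), fun i => ⟨?_, ?_, ?_⟩, ?_, ?_⟩
  · exact isEmb_liftMap hS hT' hrS hrT (ℓ.branchPreserving_stringMap i) (hL i) hLM
  · exact strong_liftMap hS hT' hrS hrT (hL i) hLM
  · exact leafPres_liftMap hS hT' hrS hrT (hL i) hLM
  · intro i j x y _ _
    rw [← liftMap_meet hS hT' hrS hrT (ℓ.branchPreserving_stringMap i) (hL i) hLM,
      ← liftMap_meet hS hT' hrS hrT (ℓ.branchPreserving_stringMap j) (hL j) hLM,
      ht_liftMap hS hT' hrS hrT (hL i) hLM, ht_liftMap hS hT' hrS hrT (hL j) hLM]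
  · obtain ⟨c, hc⟩ := hℓ
    refine ⟨c, fun p hp => ?_⟩
    have hlen (i : Fin t) : (S.addr k rS (p i)).length = M := by
      have := (addr_spec hS hrS (p i)).1
      rw [hS.leaf_iff.1 (hp i)] at this
      omega
    choose x hx using fun i => List.exists_ofFn_eq (hlen i)
    rw [← hc fun i => x i]
    congr 1
    funext i
    change T.node k rT (ℓ.stringMap i (S.addr k rS (p i))) = _
    rw [← hx i, ℓ.stringMap_ofFn i (fun i => x i)]

end

theorem halpern_laeuchli_leaves_general (k d t m : ℕ) :
    ∃ n : ℕ, ∀ Tm Tn : OTree, Regular Tm k m → Regular Tn k n →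
      ∀ C : (Fin t → Fin Tn.card) → Fin d,
        ∃ g : Fin t → (Fin Tm.card → Fin Tn.card),
          (∀ i, IsEmb Tm Tn (g i) ∧ Strong Tm Tn (g i) ∧ LeafPres Tm Tn (g i)) ∧
          (∀ i j x y, Tm.Leaf x → Tm.Leaf y →
            Tn.ht (Tn.meet (g i x) (g i y)) = Tn.ht (Tn.meet (g j x) (g j y))) ∧
          ∃ c : Fin d, ∀ p : Fin t → Fin Tm.card, (∀ i, Tm.Leaf (p i)) →
            C (fun i => g i (p i)) = c := by
  cases m with
  | zero =>
    exact ⟨1, fun Tm Tn hTm hTn C => exists_isMonoStrongSeq_of_card_eq_zero (hTm.2.2.2 rfl)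
      (hTn.exists_root one_pos).choose C⟩
  | succ M =>
    obtain ⟨N, hHJ⟩ :=
      Combinatorics.Line.exists_mono_in_fin_dimension (Fin t → Fin M → Fin k) (Fin d)
    refine ⟨M * N + 1, fun Tm Tn hTm hTn C => ?_⟩
    obtain ⟨rm, hrm⟩ := hTm.exists_root M.succ_pos
    obtain ⟨rn, hrn⟩ := hTn.exists_root (M * N).succ_pos
    obtain ⟨ℓ, hℓ⟩ := hHJ fun w => C fun i => Tn.node k rn (wordString w i)
    exact exists_isMonoStrongSeq_of_isMono hTm hTn hrm hrn C ℓ hℓ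

/-- Halpern–Läuchli theorem for strong subtrees (product version for leaves): for
`k ≥ 1`, `d > 0`, `t ≥ 1` and `m`, there is `n` such that for any regular ordered trees
`Tm`, `Tn` with branching `k` and heights `m`, `n`, every `d`-coloring of the `t`-fold
product of `leaves(Tn)` admits a strong sequence of leaf preserving embeddings
`g₁, …, g_t : Tm → Tn` with `g₁(leaves Tm) × ⋯ × g_t(leaves Tm)` monochromatic. -/
theorem halpern_laeuchli_leaves (k d t m : ℕ) (hk : 1 ≤ k) (hd : 0 < d) (ht : 1 ≤ t) :
    ∃ n : ℕ, ∀ Tm Tn : OTree, Regular Tm k m → Regular Tn k n →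
      ∀ C : (Fin t → Fin Tn.card) → Fin d,
        ∃ g : Fin t → (Fin Tm.card → Fin Tn.card),
          (∀ i, IsEmb Tm Tn (g i) ∧ Strong Tm Tn (g i) ∧ LeafPres Tm Tn (g i)) ∧
          (∀ i j x y, Tm.Leaf x → Tm.Leaf y →
            Tn.ht (Tn.meet (g i x) (g i y)) = Tn.ht (Tn.meet (g j x) (g j y))) ∧
          ∃ c : Fin d, ∀ p : Fin t → Fin Tm.card, (∀ i, Tm.Leaf (p i)) →
            C (fun i => g i (p i)) = c :=
  halpern_laeuchli_leaves_general k d t m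
end

section
/- Hales–Jewett theorem (substitution form): Let B be a finite nonempty set disjoint from ℕ. Given d > 0 and m, there exists n such that for every d-coloring of the functions from [n] to B, there is a function w₀ : [n] → B ∪ [m] such that [m] is included in the image of w₀ and w₀([l]) ∩ [m] is an initial segment of [m] for every l ≤ n, and such that the set {v ∘ w₀ : v : B ∪ [m] → B with v restricted to B equal to the identity} is monochromatic. -/
/-!
Apply the Hales–Jewett theorem over the alphabet `B^m`. Writing the coordinates of a word in
`(B^m)^N` one after another turns a monochromatic combinatorial line into an `m`-dimensional
monochromatic subspace of `B^(N m)`: each wildcard block of the line becomes the block of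
variables `1, …, m` in increasing order, so the variables seen in any prefix form an initial
segment of `[m]`.
-/

namespace Combinatorics

theorem Subspace.comp_idxFun {η α ι : Type*} (l : Subspace η α ι) {v : α ⊕ η → α}
    (hv : ∀ a, v (Sum.inl a) = a) : v ∘ l.idxFun = l (v ∘ Sum.inr) := by
  funext i
  cases h : l.idxFun i <;> simp [Subspace.coe_apply, h, hv]

namespace Line

theorem exists_mono_in_high_dimension_fin (α κ : Type*) [Finite α] [Finite κ] :
    ∃ n, ∀ C : (Fin n → α) → κ, ∃ l : Line α (Fin n), l.IsMono C := by
  obtain ⟨ι, _, hι⟩ := exists_mono_in_high_dimension α κ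
  let e := Fintype.equivFin ι
  refine ⟨Fintype.card ι, fun C ↦ ?_⟩
  obtain ⟨l, c, hl⟩ := hι fun x ↦ C (x ∘ e.symm)
  obtain ⟨i, hi⟩ := l.proper
  exact ⟨⟨l.idxFun ∘ e.symm, e i, by simpa using hi⟩, c, hl⟩

variable {α : Type*} {m N : ℕ}

/-- Position `j + m * q` of `l.blockSubspace x` is letter `j` of `l x q`. -/
def blockSubspace (l : Line (Fin m → α) (Fin N)) : Subspace (Fin m) α (Fin (N * m)) :=
  l.toSubspace.reindex (Equiv.refl _) (Equiv.refl _) finProdFinEquiv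

theorem IsMono.blockSubspace {κ : Type*} {l : Line (Fin m → α) (Fin N)}
    {C : (Fin (N * m) → α) → κ}
    (hl : l.IsMono fun x : Fin N → Fin m → α ↦
      C fun k ↦ x (finProdFinEquiv.symm k).1 (finProdFinEquiv.symm k).2) :
    l.blockSubspace.IsMono C := by
  simpa [Line.blockSubspace, Function.comp_def] using hl

theorem blockSubspace_idxFun (l : Line (Fin m → α) (Fin N)) (q : Fin N) (j : Fin m) :
    l.blockSubspace.idxFun (finProdFinEquiv (q, j)) =
      (l.idxFun q).elim (Sum.inr j) (fun f ↦ Sum.inl (f j)) := by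
  simp only [blockSubspace, Subspace.reindex, Equiv.coe_refl, Sum.map_id_id, id,
    Equiv.symm_apply_apply, toSubspace]

theorem exists_le_blockSubspace_idxFun_eq_inr (l : Line (Fin m → α) (Fin N))
    {i : Fin (N * m)} {j j' : Fin m} (h : l.blockSubspace.idxFun i = Sum.inr j) (hj : j' ≤ j) :
    ∃ i' ≤ i, l.blockSubspace.idxFun i' = Sum.inr j' := by
  obtain ⟨⟨q, k⟩, rfl⟩ := finProdFinEquiv.surjective i
  rw [blockSubspace_idxFun] at h
  cases hq : l.idxFun q with
  | some f => simp [hq] at h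
  | none =>
    obtain rfl : k = j := by simpa [hq] using h
    refine ⟨finProdFinEquiv (q, j'), ?_, by simp [blockSubspace_idxFun, hq]⟩
    rw [Fin.le_iff_val_le_val, finProdFinEquiv_apply_val, finProdFinEquiv_apply_val]
    exact Nat.add_le_add_right hj _

end Line

end Combinatorics

open Combinatorics in
theorem hales_jewett_substitution_general (B : Type) [Fintype B] (d m : ℕ) :
    ∃ n : ℕ, ∀ C : (Fin n → B) → Fin d,
      ∃ w₀ : Fin n → B ⊕ Fin m,
        (∀ j : Fin m, ∃ i : Fin n, w₀ i = Sum.inr j) ∧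
        (∀ l : ℕ, ∀ j j' : Fin m, j' ≤ j →
          (∃ i : Fin n, (i : ℕ) < l ∧ w₀ i = Sum.inr j) →
          ∃ i : Fin n, (i : ℕ) < l ∧ w₀ i = Sum.inr j') ∧
        ∃ c : Fin d, ∀ v : B ⊕ Fin m → B, (∀ b : B, v (Sum.inl b) = b) →
          C (v ∘ w₀) = c := by
  obtain ⟨N, hN⟩ := Line.exists_mono_in_high_dimension_fin (Fin m → B) (Fin d)
  refine ⟨N * m, fun C ↦ ?_⟩
  obtain ⟨l, hl⟩ :=
    hN fun x ↦ C fun k ↦ x (finProdFinEquiv.symm k).1 (finProdFinEquiv.symm k).2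
  obtain ⟨c, hc⟩ := hl.blockSubspace
  refine ⟨l.blockSubspace.idxFun, l.blockSubspace.proper, ?_, c, fun v hv ↦ ?_⟩
  · rintro L j j' hj ⟨i, hiL, hi⟩
    obtain ⟨i', hi'i, hi'⟩ := l.exists_le_blockSubspace_idxFun_eq_inr hi hj
    exact ⟨i', lt_of_le_of_lt hi'i hiL, hi'⟩
  · rw [l.blockSubspace.comp_idxFun hv]
    exact hc _

/-- Hales–Jewett theorem (substitution form): for a finite nonempty alphabet `B`,
`d > 0` and `m`, there is `n` such that for every `d`-coloring of the words
`[n] → B` there is a variable word `w₀ : [n] → B ⊕ [m]` such that every variable of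
`[m]` occurs in `w₀`, the variables occurring among the first `l` letters form an
initial segment of `[m]` for each `l ≤ n`, and the set of substitution instances
`{v ∘ w₀ : v : B ⊕ [m] → B, v = id on B}` is monochromatic. -/
theorem hales_jewett_substitution (B : Type) [Fintype B] [Nonempty B] (d m : ℕ)
    (hd : 0 < d) :
    ∃ n : ℕ, ∀ C : (Fin n → B) → Fin d,
      ∃ w₀ : Fin n → B ⊕ Fin m,
        (∀ j : Fin m, ∃ i : Fin n, w₀ i = Sum.inr j) ∧
        (∀ l : ℕ, ∀ j j' : Fin m, j' ≤ j →
          (∃ i : Fin n, (i : ℕ) < l ∧ w₀ i = Sum.inr j) →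
          ∃ i : Fin n, (i : ℕ) < l ∧ w₀ i = Sum.inr j') ∧
        ∃ c : Fin d, ∀ v : B ⊕ Fin m → B, (∀ b : B, v (Sum.inl b) = b) →
          C (v ∘ w₀) = c :=
  hales_jewett_substitution_general B d m
end
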